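/- arXiv:1308.1607 — 9 statements merged into one kernel-verified Lean document; each statement's English description precedes it below -/
import Mathlib

section
/- For vectors κ in the positive cone Γ₊ ⊂ ℝⁿ, the function σ₂(κ) = (H₂(κ))^{1/2}, where H₂ = Σ_{i<j} κ_i κ_j (the second elementary symmetric polynomial), is concave on Γ₊. -/
/-!
`2 H₂(x) = (∑ xᵢ)² - ∑ xᵢ²` is a Lorentzian quadratic form, whose polar form is
`B(x, y) = (∑ xᵢ)(∑ yᵢ) - ⟨x, y⟩`. On the cone where `∑ xᵢ ≥ 0` and `H₂ ≥ 0` the reverse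
Cauchy–Schwarz (Aczél) inequality gives `B(x, y) ≥ 2 √H₂(x) √H₂(y)`, and expanding
`H₂(t x + (1 - t) y) = t² H₂(x) + t (1 - t) B(x, y) + (1 - t)² H₂(y)` turns this into
`H₂(t x + (1 - t) y) ≥ (t √H₂(x) + (1 - t) √H₂(y))²`.
-/

open Finset

variable {ι R : Type*} [Fintype ι] [LinearOrder ι]

/-- `H₂(x) = pairSum x x`. -/
def pairSum [CommSemiring R] (x y : ι → R) : R :=
  ∑ p ∈ univ.filter (fun p : ι × ι => p.1 < p.2), x p.1 * y p.2

theorem pairSum_nonneg [CommSemiring R] [PartialOrder R] [IsOrderedRing R] {x y : ι → R}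
    (hx : ∀ i, 0 ≤ x i) (hy : ∀ i, 0 ≤ y i) : 0 ≤ pairSum x y :=
  sum_nonneg fun _ _ => mul_nonneg (hx _) (hy _)

theorem pairSum_add_pairSum_swap [CommRing R] (x y : ι → R) :
    pairSum x y + pairSum y x = (∑ i, x i) * (∑ i, y i) - ∑ i, x i * y i := by
  have hsplit : ∀ p : ι × ι, x p.1 * y p.2 = (if p.1 < p.2 then x p.1 * y p.2 else 0)
      + (if p.2 < p.1 then x p.1 * y p.2 else 0) + (if p.1 = p.2 then x p.1 * y p.2 else 0) := by
    rintro ⟨i, j⟩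
    rcases lt_trichotomy i j with h | rfl | h
    · simp [h, h.ne, h.not_gt]
    · simp
    · simp [h, h.ne', h.not_gt]
  have hswap : pairSum y x = ∑ p : ι × ι, if p.2 < p.1 then x p.1 * y p.2 else 0 := by
    rw [pairSum, sum_filter, ← (Equiv.prodComm ι ι).sum_comp]
    simp [mul_comm]
  have hdiag : ∑ i, x i * y i = ∑ p : ι × ι, if p.1 = p.2 then x p.1 * y p.2 else 0 := by
    simp [Fintype.sum_prod_type]
  rw [eq_sub_iff_add_eq, Fintype.sum_mul_sum, ← Fintype.sum_prod_type', hswap, hdiag, pairSum,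
    sum_filter, ← sum_add_distrib, ← sum_add_distrib]
  exact sum_congr rfl fun p _ => (hsplit p).symm

theorem two_mul_pairSum_self [CommRing R] (x : ι → R) :
    2 * pairSum x x = (∑ i, x i) ^ 2 - ∑ i, x i ^ 2 := by
  simpa [two_mul, sq] using pairSum_add_pairSum_swap x x

theorem pairSum_linear_combination [CommSemiring R] (a b : R) (x y : ι → R) :
    pairSum (fun i => a * x i + b * y i) (fun i => a * x i + b * y i)
      = a ^ 2 * pairSum x x + a * b * (pairSum x y + pairSum y x) + b ^ 2 * pairSum y y := by
  simp only [pairSum, mul_add, mul_sum, ← sum_add_distrib]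
  exact sum_congr rfl fun _ _ => by ring

/-- Aczél's inequality in the plane. -/
theorem sqrt_sq_sub_sq_mul_sqrt_sq_sub_sq_le {a b u v : ℝ} (hu : 0 ≤ u) (hv : 0 ≤ v)
    (hua : u ≤ a) (hvb : v ≤ b) :
    √(a ^ 2 - u ^ 2) * √(b ^ 2 - v ^ 2) ≤ a * b - u * v := by
  rw [← Real.sqrt_mul (by nlinarith), Real.sqrt_le_iff]
  constructor
  · nlinarith [mul_le_mul hua hvb hv (hu.trans hua)]
  · nlinarith [sq_nonneg (a * v - b * u)]

theorem two_mul_sqrt_pairSum_self_mul_sqrt_le (x y : ι → ℝ)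
    (hx : 0 ≤ ∑ i, x i) (hy : 0 ≤ ∑ i, y i) (hxx : 0 ≤ pairSum x x) (hyy : 0 ≤ pairSum y y) :
    2 * (√(pairSum x x) * √(pairSum y y)) ≤ pairSum x y + pairSum y x := by
  have hNx : ∑ i, x i ^ 2 ≤ (∑ i, x i) ^ 2 := by linarith [two_mul_pairSum_self x]
  have hNy : ∑ i, y i ^ 2 ≤ (∑ i, y i) ^ 2 := by linarith [two_mul_pairSum_self y]
  have hNx0 : 0 ≤ ∑ i, x i ^ 2 := sum_nonneg fun i _ => sq_nonneg (x i)
  have hNy0 : 0 ≤ ∑ i, y i ^ 2 := sum_nonneg fun i _ => sq_nonneg (y i)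
  calc 2 * (√(pairSum x x) * √(pairSum y y))
      = √(2 * pairSum x x) * √(2 * pairSum y y) := by
        rw [Real.sqrt_mul zero_le_two, Real.sqrt_mul zero_le_two]
        linear_combination (-(√(pairSum x x) * √(pairSum y y))) * Real.mul_self_sqrt zero_le_two
    _ = √((∑ i, x i) ^ 2 - √(∑ i, x i ^ 2) ^ 2) * √((∑ i, y i) ^ 2 - √(∑ i, y i ^ 2) ^ 2) := by
        rw [two_mul_pairSum_self, two_mul_pairSum_self, Real.sq_sqrt hNx0, Real.sq_sqrt hNy0]
    _ ≤ (∑ i, x i) * (∑ i, y i) - √(∑ i, x i ^ 2) * √(∑ i, y i ^ 2) :=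
        sqrt_sq_sub_sq_mul_sqrt_sq_sub_sq_le (Real.sqrt_nonneg _) (Real.sqrt_nonneg _)
          (Real.sqrt_le_iff.2 ⟨hx, hNx⟩) (Real.sqrt_le_iff.2 ⟨hy, hNy⟩)
    _ ≤ (∑ i, x i) * (∑ i, y i) - ∑ i, x i * y i := by
        linarith [Real.sum_mul_le_sqrt_mul_sqrt univ x y]
    _ = pairSum x y + pairSum y x := (pairSum_add_pairSum_swap x y).symm

theorem mul_sqrt_add_mul_sqrt_le_sqrt {A B C t : ℝ} (hA : 0 ≤ A) (hC : 0 ≤ C)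
    (ht0 : 0 ≤ t) (ht1 : t ≤ 1) (hB : 2 * (√A * √C) ≤ B) :
    t * √A + (1 - t) * √C ≤ √(t ^ 2 * A + t * (1 - t) * B + (1 - t) ^ 2 * C) := by
  apply Real.le_sqrt_of_sq_le
  nlinarith [Real.sq_sqrt hA, Real.sq_sqrt hC, mul_nonneg ht0 (sub_nonneg.2 ht1)]

theorem sigma2_concave_general (n : ℕ)
    (κ lam : Fin n → ℝ) (hκ : ∀ i, 0 < κ i) (hlam : ∀ i, 0 < lam i)
    (t : ℝ) (ht0 : 0 ≤ t) (ht1 : t ≤ 1) :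
    t * Real.sqrt (∑ p ∈ Finset.univ.filter (fun p : Fin n × Fin n => p.1 < p.2),
        κ p.1 * κ p.2)
      + (1 - t) * Real.sqrt (∑ p ∈ Finset.univ.filter (fun p : Fin n × Fin n => p.1 < p.2),
        lam p.1 * lam p.2)
    ≤ Real.sqrt (∑ p ∈ Finset.univ.filter (fun p : Fin n × Fin n => p.1 < p.2),
        (t * κ p.1 + (1 - t) * lam p.1) * (t * κ p.2 + (1 - t) * lam p.2)) := by
  have hκ0 i := (hκ i).le
  have hlam0 i := (hlam i).le
  change t * √(pairSum κ κ) + (1 - t) * √(pairSum lam lam)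
    ≤ √(pairSum (fun i => t * κ i + (1 - t) * lam i) (fun i => t * κ i + (1 - t) * lam i))
  rw [pairSum_linear_combination]
  exact mul_sqrt_add_mul_sqrt_le_sqrt (pairSum_nonneg hκ0 hκ0) (pairSum_nonneg hlam0 hlam0) ht0 ht1
    (two_mul_sqrt_pairSum_self_mul_sqrt_le κ lam (sum_nonneg fun i _ => hκ0 i)
      (sum_nonneg fun i _ => hlam0 i) (pairSum_nonneg hκ0 hκ0) (pairSum_nonneg hlam0 hlam0))

/-- σ₂ = √H₂ is concave on the positive cone Γ₊. -/
theorem sigma2_concave (n : ℕ) (hn : 2 ≤ n)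
    (κ lam : Fin n → ℝ) (hκ : ∀ i, 0 < κ i) (hlam : ∀ i, 0 < lam i)
    (t : ℝ) (ht0 : 0 ≤ t) (ht1 : t ≤ 1) :
    t * Real.sqrt (∑ p ∈ Finset.univ.filter (fun p : Fin n × Fin n => p.1 < p.2),
        κ p.1 * κ p.2)
      + (1 - t) * Real.sqrt (∑ p ∈ Finset.univ.filter (fun p : Fin n × Fin n => p.1 < p.2),
        lam p.1 * lam p.2)
    ≤ Real.sqrt (∑ p ∈ Finset.univ.filter (fun p : Fin n × Fin n => p.1 < p.2),
        (t * κ p.1 + (1 - t) * lam p.1) * (t * κ p.2 + (1 - t) * lam p.2)) :=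
  sigma2_concave_general n κ lam hκ hlam t ht0 ht1
end

section
/- For the second elementary symmetric polynomial H₂ on the positive cone, the Hessian estimate D²H₂(κ)(ξ,ξ) ≤ (1/2) H₂(κ)^{-1} (DH₂(κ)·ξ)² holds for all κ ∈ Γ₊ and all ξ ∈ ℝⁿ. -/
/-!
The Hessian of `H₂` is the matrix `J - I`, whose form `B(x, y) = (∑ x)(∑ y) - ⟨x, y⟩` is
Lorentzian: by Cauchy–Schwarz it is negative semidefinite on the `B`-orthogonal complement of
any `κ` with `B(κ, κ) > 0`. Such forms satisfy the reverse Cauchy–Schwarz inequality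
`B(ξ, ξ) B(κ, κ) ≤ B(κ, ξ)²`, and on the positive cone `B(κ, κ) = 2 H₂(κ) > 0` while
`B(κ, ξ) = DH₂(κ) · ξ`.
-/

open Finset

namespace LinearMap.BilinForm

variable {𝕜 E : Type*} [Field 𝕜] [LinearOrder 𝕜] [IsStrictOrderedRing 𝕜] [AddCommGroup E]
  [Module 𝕜 E]

theorem apply_self_mul_apply_self_le_sq {B : LinearMap.BilinForm 𝕜 E} (hB : B.IsSymm) {κ : E}
    (hκ : 0 < B κ κ) (hneg : ∀ w, B κ w = 0 → B w w ≤ 0) (ξ : E) :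
    B ξ ξ * B κ κ ≤ B κ ξ ^ 2 := by
  set w := B κ κ • ξ - B κ ξ • κ
  have hw : B κ w = 0 := by
    simp only [map_sub, map_smul, smul_eq_mul, w]
    ring
  have hww : B w w = B κ κ * (B ξ ξ * B κ κ - B κ ξ ^ 2) := by
    simp only [map_sub, map_smul, LinearMap.sub_apply, smul_apply, smul_eq_mul, hB.eq ξ κ, w]
    ring
  nlinarith [hneg w hw]

end LinearMap.BilinForm

section

variable {R ι : Type*}

def hessianH₂ (R ι : Type*) [Zero R] [One R] [DecidableEq ι] : Matrix ι ι R :=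
  Matrix.of fun i j => if i = j then 0 else 1

theorem hessianH₂_isSymm [Zero R] [One R] [DecidableEq ι] : (hessianH₂ R ι).IsSymm :=
  Matrix.IsSymm.ext fun i j => by simp [hessianH₂, eq_comm]

variable [Fintype ι]

theorem toBilin'_hessianH₂_apply [CommRing R] [DecidableEq ι] (x y : ι → R) :
    (hessianH₂ R ι).toBilin' x y = (∑ i, x i) * (∑ j, y j) - ∑ i, x i * y i := by
  simp only [Matrix.toBilin'_apply, hessianH₂, Matrix.of_apply, sum_mul_sum, ← sum_sub_distrib]
  refine sum_congr rfl fun i _ => ?_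
  simp [mul_ite, ite_mul, sum_ite, filter_ne]

theorem toBilin'_hessianH₂_nonpos_of_orthogonal [Field R] [LinearOrder R] [IsStrictOrderedRing R]
    [DecidableEq ι] {κ w : ι → R} (hκ : 0 < (hessianH₂ R ι).toBilin' κ κ)
    (hw : (hessianH₂ R ι).toBilin' κ w = 0) : (hessianH₂ R ι).toBilin' w w ≤ 0 := by
  rw [toBilin'_hessianH₂_apply] at hκ hw ⊢
  have hcs := sum_mul_sq_le_sq_mul_sq univ κ w
  simp only [← sq] at hκ ⊢
  -- `hw` reads `(∑ κ) (∑ w) = ⟨κ, w⟩`, so Cauchy–Schwarz bounds `(∑ κ)² (∑ w)²` by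
  -- `(∑ κ²) (∑ w²) ≤ (∑ κ)² (∑ w²)`.
  rw [← sub_eq_zero.mp hw] at hcs
  have hK : 0 < (∑ i, κ i) ^ 2 := by nlinarith [sum_nonneg fun i (_ : i ∈ univ) => sq_nonneg (κ i)]
  have hW : 0 ≤ ∑ i, w i ^ 2 := sum_nonneg fun i _ => sq_nonneg (w i)
  nlinarith

theorem sum_sum_filter_ne_mul_eq_toBilin'_hessianH₂ [CommRing R] [DecidableEq ι] (κ ξ : ι → R) :
    ∑ i, (∑ j with j ≠ i, κ j) * ξ i = (hessianH₂ R ι).toBilin' κ ξ := by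
  simp only [filter_ne', sum_erase_eq_sub (mem_univ _), toBilin'_hessianH₂_apply, sub_mul,
    sum_sub_distrib, ← mul_sum]

variable [LinearOrder ι]

theorem two_nsmul_sum_lt_eq_sum_ne {M : Type*} [AddCommMonoid M] (f : ι → ι → M)
    (hf : ∀ i j, f i j = f j i) :
    2 • ∑ p : ι × ι with p.1 < p.2, f p.1 p.2 = ∑ p : ι × ι with p.1 ≠ p.2, f p.1 p.2 := by
  have hswap : ∑ p : ι × ι with p.1 < p.2, f p.1 p.2 = ∑ p : ι × ι with p.2 < p.1, f p.1 p.2 := by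
    simp only [sum_filter]
    exact Fintype.sum_equiv (Equiv.prodComm ι ι) _ _ fun _ => by rw [hf]; rfl
  rw [two_nsmul]
  nth_rw 2 [hswap]
  rw [← sum_union (disjoint_filter.mpr fun p _ h => h.asymm), ← filter_or]
  simp only [lt_or_lt_iff_ne]

theorem two_mul_sum_lt_eq_toBilin'_hessianH₂ [CommRing R] (κ : ι → R) :
    2 * ∑ p : ι × ι with p.1 < p.2, κ p.1 * κ p.2 = (hessianH₂ R ι).toBilin' κ κ := by
  rw [two_mul, ← two_nsmul, two_nsmul_sum_lt_eq_sum_ne _ fun i j => mul_comm (κ i) (κ j),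
    sum_filter, Fintype.sum_prod_type, Matrix.toBilin'_apply]
  simp [hessianH₂, ite_mul, mul_ite]

theorem sum_filter_lt_mul_pos [Nontrivial ι] [Field R] [LinearOrder R] [IsStrictOrderedRing R]
    {κ : ι → R} (hκ : ∀ i, 0 < κ i) : 0 < ∑ p : ι × ι with p.1 < p.2, κ p.1 * κ p.2 := by
  obtain ⟨i, j, hij⟩ := exists_pair_ne ι
  refine sum_pos (fun p _ => mul_pos (hκ _) (hκ _)) ⟨(min i j, max i j), ?_⟩
  simpa [eq_comm] using hij

end

/-- Hessian estimate for H₂ on the positive cone: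
`D²H₂(ξ,ξ) ≤ (1/2) H₂⁻¹ (DH₂·ξ)²`, where `H₂,ᵢⱼ = 1 - δᵢⱼ` and
`H₂,ᵢ = ∑_{j≠i} κⱼ`. -/
theorem H2_hessian_estimate (n : ℕ) (hn : 2 ≤ n)
    (κ : Fin n → ℝ) (hκ : ∀ i, 0 < κ i) (ξ : Fin n → ℝ) :
    ∑ i, ∑ j, (if i = j then (0 : ℝ) else 1) * ξ i * ξ j
      ≤ (1 / 2) *
        (∑ p ∈ Finset.univ.filter (fun p : Fin n × Fin n => p.1 < p.2), κ p.1 * κ p.2)⁻¹ *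
        (∑ i, (∑ j ∈ Finset.univ.filter (fun j => j ≠ i), κ j) * ξ i) ^ 2 := by
  have : Nontrivial (Fin n) := Fin.nontrivial_iff_two_le.mpr hn
  set B := (hessianH₂ ℝ (Fin n)).toBilin'
  have hHess : ∑ i, ∑ j, (if i = j then (0 : ℝ) else 1) * ξ i * ξ j = B ξ ξ := by
    simp only [B, Matrix.toBilin'_apply, hessianH₂, Matrix.of_apply, mul_comm (ξ _)]
  have hB : 0 < B κ κ := by
    rw [← two_mul_sum_lt_eq_toBilin'_hessianH₂]
    exact mul_pos two_pos (sum_filter_lt_mul_pos hκ)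
  have hcs : B ξ ξ * B κ κ ≤ B κ ξ ^ 2 :=
    LinearMap.BilinForm.apply_self_mul_apply_self_le_sq
      (Matrix.isSymm_toBilin'_iff_isSymm.mpr hessianH₂_isSymm) hB
      (fun _ => toBilin'_hessianH₂_nonpos_of_orthogonal hB) ξ
  rw [← two_mul_sum_lt_eq_toBilin'_hessianH₂ κ] at hB hcs
  rw [hHess, sum_sum_filter_ne_mul_eq_toBilin'_hessianH₂]
  refine ((le_div_iff₀ hB).mpr hcs).trans_eq ?_
  ring
end

section
/- The function σ₂ = H₂^{1/2} is strictly concave on Γ₊ in the sense that if ξ ∈ ℝⁿ is nonzero, D²σ₂(κ)(ξ, ·) = 0 and Σᵢ κᵢ ξⁱ = 0, then ξ = 0; equivalently, the kernel of the Hessian D²σ₂(κ) is exactly the line spanned by κ. -/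
open Finset

/-- `F = √(H² - |A|²) = √(2 H₂)`, as in the paper's proof for `σ₂`. -/
noncomputable def Fsigma2 (n : ℕ) (κ : Fin n → ℝ) : ℝ :=
  Real.sqrt ((∑ i, κ i) ^ 2 - ∑ i, (κ i) ^ 2)

/-- The Hessian of `F`: `F_{ij} = -F⁻³(H-κᵢ)(H-κⱼ) + F⁻¹(1-δᵢⱼ)`. -/
noncomputable def Fsigma2Hess (n : ℕ) (κ : Fin n → ℝ) (i j : Fin n) : ℝ :=
  -((Fsigma2 n κ) ^ 3)⁻¹ * ((∑ l, κ l) - κ i) * ((∑ l, κ l) - κ j)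
    + (Fsigma2 n κ)⁻¹ * (if i = j then 0 else 1)

/-! With `H = ∑ κᵢ`, `S = ∑ ξᵢ` and `F² = H² - ∑ κᵢ²`, orthogonality `∑ κᵢ ξᵢ = 0` turns
`∑ⱼ (H - κⱼ) ξⱼ` into `H S`, so each row of `D²F(κ) ξ = 0` reads
`F² ξᵢ = F² S - H S (H - κᵢ)`. Summing over `i` gives `(n - 1) S ∑ κᵢ² = 0`, hence `S = 0`,
and then every `ξᵢ` vanishes because `F > 0` on `Γ₊` when `n ≥ 2`. -/

section FiniteSums

variable {ι : Type*} [Fintype ι] {κ : ι → ℝ}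

theorem lt_sum_of_pos (hκ : ∀ i, 0 < κ i) (hcard : 2 ≤ Fintype.card ι) (i : ι) :
    κ i < ∑ j, κ j := by
  obtain ⟨j, hji⟩ := Fintype.exists_ne_of_one_lt_card hcard i
  exact single_lt_sum hji (mem_univ i) (mem_univ j) (hκ j) fun k _ _ ↦ (hκ k).le

theorem sum_sq_lt_sq_sum_of_pos (hκ : ∀ i, 0 < κ i) (hcard : 2 ≤ Fintype.card ι) :
    ∑ i, κ i ^ 2 < (∑ i, κ i) ^ 2 := by
  have hne : (univ : Finset ι).Nonempty :=
    univ_nonempty_iff.mpr (Fintype.card_pos_iff.mp (by omega))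
  calc ∑ i, κ i ^ 2 = ∑ i, κ i * κ i := by simp only [sq]
    _ < ∑ i, κ i * ∑ j, κ j :=
      sum_lt_sum_of_nonempty hne fun i _ ↦ mul_lt_mul_of_pos_left (lt_sum_of_pos hκ hcard i) (hκ i)
    _ = (∑ i, κ i) ^ 2 := by rw [← sum_mul, sq]

theorem sum_sub_mul_eq_of_sum_mul_eq_zero {ξ : ι → ℝ} (c : ℝ) (horth : ∑ i, κ i * ξ i = 0) :
    ∑ i, (c - κ i) * ξ i = c * ∑ i, ξ i := by
  simp only [sub_mul, sum_sub_distrib, ← mul_sum, horth, sub_zero]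

end FiniteSums

section Sigma2

variable {n : ℕ} {κ : Fin n → ℝ}

theorem Fsigma2_sq_of_pos (hn : 2 ≤ n) (hκ : ∀ i, 0 < κ i) :
    Fsigma2 n κ ^ 2 = (∑ i, κ i) ^ 2 - ∑ i, κ i ^ 2 :=
  Real.sq_sqrt (sub_nonneg.mpr (sum_sq_lt_sq_sum_of_pos hκ (by simpa using hn)).le)

theorem Fsigma2_pos (hn : 2 ≤ n) (hκ : ∀ i, 0 < κ i) : 0 < Fsigma2 n κ :=
  Real.sqrt_pos.mpr (sub_pos.mpr (sum_sq_lt_sq_sum_of_pos hκ (by simpa using hn)))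

theorem sum_Fsigma2Hess_mul (κ ξ : Fin n → ℝ) (i : Fin n) :
    ∑ j, Fsigma2Hess n κ i j * ξ j =
      -(Fsigma2 n κ ^ 3)⁻¹ * ((∑ l, κ l) - κ i) * ∑ j, ((∑ l, κ l) - κ j) * ξ j
        + (Fsigma2 n κ)⁻¹ * (∑ j, ξ j - ξ i) := by
  have hoff : ∑ j, (if i = j then 0 else 1) * ξ j = ∑ j, ξ j - ξ i := by
    simp [sum_ite, filter_ne]
  simp only [Fsigma2Hess, add_mul, sum_add_distrib, mul_assoc, ← mul_sum, hoff]

theorem sq_mul_eq_of_Fsigma2Hess_kernel {ξ : Fin n → ℝ} (hF : Fsigma2 n κ ≠ 0)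
    (horth : ∑ i, κ i * ξ i = 0) {i : Fin n} (hker : ∑ j, Fsigma2Hess n κ i j * ξ j = 0) :
    Fsigma2 n κ ^ 2 * ξ i =
      Fsigma2 n κ ^ 2 * ∑ j, ξ j - (∑ l, κ l) * (∑ j, ξ j) * ((∑ l, κ l) - κ i) := by
  rw [sum_Fsigma2Hess_mul, sum_sub_mul_eq_of_sum_mul_eq_zero _ horth] at hker
  field_simp at hker
  linear_combination -hker

theorem sum_eq_zero_of_Fsigma2Hess_kernel (hn : 2 ≤ n) (hκ : ∀ i, 0 < κ i) {ξ : Fin n → ℝ}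
    (hker : ∀ i, ∑ j, Fsigma2Hess n κ i j * ξ j = 0) (horth : ∑ i, κ i * ξ i = 0) :
    ∑ i, ξ i = 0 := by
  set F := Fsigma2 n κ
  set H := ∑ i, κ i
  set S := ∑ i, ξ i
  have hF := Fsigma2_pos hn hκ
  have hsum : F ^ 2 * S = n * (F ^ 2 * S) - H * S * (n * H - H) := by
    have := Fintype.sum_congr _ _ fun i ↦ sq_mul_eq_of_Fsigma2Hess_kernel hF.ne' horth (hker i)
    simpa [← mul_sum, sum_sub_distrib] using this
  have hQ : 0 < ∑ i, κ i ^ 2 :=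
    sum_pos (fun i _ ↦ pow_pos (hκ i) 2) ⟨⟨0, by omega⟩, mem_univ _⟩
  have hn1 : (n : ℝ) - 1 ≠ 0 := by
    have : (2 : ℝ) ≤ n := by exact_mod_cast hn
    linarith
  have : ((n : ℝ) - 1) * (∑ i, κ i ^ 2) * S = 0 := by
    linear_combination hsum + ((n : ℝ) - 1) * S * Fsigma2_sq_of_pos hn hκ
  simpa [hn1, hQ.ne'] using this

end Sigma2

/-- σ₂ is strictly concave on Γ₊: if `D²σ₂(κ)(ξ,·) = 0` and
`∑ κᵢ ξᵢ = 0` then `ξ = 0`; i.e. the kernel of the Hessian is the line `ℝκ`. -/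
theorem sigma2_strictly_concave (n : ℕ) (hn : 2 ≤ n)
    (κ : Fin n → ℝ) (hκ : ∀ i, 0 < κ i) (ξ : Fin n → ℝ)
    (hker : ∀ i, ∑ j, Fsigma2Hess n κ i j * ξ j = 0)
    (horth : ∑ i, κ i * ξ i = 0) :
    ξ = 0 := by
  have hF := Fsigma2_pos hn hκ
  have hS := sum_eq_zero_of_Fsigma2Hess_kernel hn hκ hker horth
  funext i
  simpa [hS, hF.ne'] using sq_mul_eq_of_Fsigma2Hess_kernel hF.ne' horth (hker i)
end

section
/- If F ∈ C²(Γ₊) is symmetric, homogeneous of degree 1, strictly monotone (∂F/∂κᵢ > 0), positive, and satisfies the class (K) Hessian inequality ∂²F/∂κᵢ∂κⱼ ≤ F⁻¹ Fᵢ Fⱼ - Fᵢ κⱼ⁻¹ δᵢⱼ (as quadratic forms), then F is strictly concave: for any κ ∈ Γ₊ and any nonzero ξ ∈ ℝⁿ not proportional to κ, D²F(κ)(ξ,ξ) < 0. -/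
open Finset

/-! The class (K) inequality bounds `D²F(κ)(ξ,ξ)` by `F⁻¹ (∑ Fᵢ ξᵢ)² - ∑ Fᵢ κᵢ⁻¹ ξᵢ²`, and by the
Euler relation `F = ∑ Fᵢ κᵢ` this is negative exactly by the strict weighted Cauchy–Schwarz
inequality `(∑ Fᵢ ξᵢ)² < (∑ Fᵢ κᵢ)(∑ Fᵢ κᵢ⁻¹ ξᵢ²)` for `ξ` not proportional to `κ`. -/

section WeightedCauchySchwarz

variable {ι : Type*} [Fintype ι] (a κ ξ : ι → ℝ)

lemma sum_mul_inv_mul_sub_smul_sq (hκ : ∀ i, κ i ≠ 0) (c : ℝ) :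
    ∑ i, a i * (κ i)⁻¹ * (ξ i - c * κ i) ^ 2
      = ∑ i, a i * (κ i)⁻¹ * ξ i ^ 2 - 2 * c * ∑ i, a i * ξ i + c ^ 2 * ∑ i, a i * κ i := by
  simp only [mul_sum, ← sum_sub_distrib, ← sum_add_distrib]
  refine sum_congr rfl fun i _ => ?_
  field_simp [hκ i]
  ring

lemma sum_mul_inv_mul_sub_smul_sq_pos (hκ : ∀ i, 0 < κ i) (ha : ∀ i, 0 < a i) {c : ℝ}
    (hc : ξ ≠ c • κ) : 0 < ∑ i, a i * (κ i)⁻¹ * (ξ i - c * κ i) ^ 2 := by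
  obtain ⟨i₀, hi₀⟩ : ∃ i, ξ i ≠ c * κ i := by
    by_contra! h
    exact hc (funext h)
  have hterm : 0 < a i₀ * (κ i₀)⁻¹ * (ξ i₀ - c * κ i₀) ^ 2 := by
    have := ha i₀; have := hκ i₀; have := sub_ne_zero.mpr hi₀
    positivity
  refine sum_pos' (fun i _ => ?_) ⟨i₀, mem_univ _, hterm⟩
  have := ha i; have := hκ i
  positivity

theorem sq_sum_mul_lt_sum_mul_mul_sum_mul_inv_mul_sq (hκ : ∀ i, 0 < κ i) (ha : ∀ i, 0 < a i)
    (hξ : ∀ c : ℝ, ξ ≠ c • κ) :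
    (∑ i, a i * ξ i) ^ 2 < (∑ i, a i * κ i) * ∑ i, a i * (κ i)⁻¹ * ξ i ^ 2 := by
  set S := ∑ i, a i * ξ i
  set F := ∑ i, a i * κ i
  have hι : Nonempty ι := by
    by_contra! h
    exact hξ 0 (funext fun i => h.elim i)
  have hF : 0 < F := sum_pos (fun i _ => mul_pos (ha i) (hκ i)) univ_nonempty
  -- the minimising multiple of `κ`
  have hpos := sum_mul_inv_mul_sub_smul_sq_pos a κ ξ hκ ha (hξ (S / F))
  rw [sum_mul_inv_mul_sub_smul_sq a κ ξ (fun i => (hκ i).ne')] at hpos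
  have hSF : S / F * F = S := div_mul_cancel₀ S hF.ne'
  nlinarith

end WeightedCauchySchwarz

theorem classK_strictly_concave_general (n : ℕ) (κ ξ g : Fin n → ℝ)
    (A : Fin n → Fin n → ℝ) (F : ℝ)
    (hκ : ∀ i, 0 < κ i) (hg : ∀ i, 0 < g i) (hF : 0 < F)
    (hEuler : ∑ i, g i * κ i = F)
    (hHess : ∀ η : Fin n → ℝ,
      ∑ i, ∑ j, A i j * η i * η j
        ≤ F⁻¹ * (∑ i, g i * η i) ^ 2 - ∑ i, g i * (κ i)⁻¹ * (η i) ^ 2)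
    (hnotprop : ∀ lam : ℝ, ξ ≠ lam • κ) :
    ∑ i, ∑ j, A i j * ξ i * ξ j < 0 := by
  have hCS := sq_sum_mul_lt_sum_mul_mul_sum_mul_inv_mul_sq g κ ξ hκ hg hnotprop
  rw [hEuler, ← inv_mul_lt_iff₀ hF] at hCS
  linarith [hHess ξ]

/-- a curvature function of class (K) is strictly concave.
Here `g i = Fᵢ = ∂F/∂κᵢ > 0`, `A i j` is the Hessian `∂²F/∂κᵢ∂κⱼ`,
`∑ gᵢκᵢ = F` is the Euler relation (degree-1 homogeneity), and the class (K)
inequality `D²F ≤ F⁻¹ DF⊗DF - diag(Fᵢ κᵢ⁻¹)` is assumed as quadratic forms.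
Then `D²F(κ)(ξ,ξ) < 0` for every nonzero `ξ` not proportional to `κ`. -/
theorem classK_strictly_concave (n : ℕ) (κ ξ g : Fin n → ℝ)
    (A : Fin n → Fin n → ℝ) (F : ℝ)
    (hκ : ∀ i, 0 < κ i) (hg : ∀ i, 0 < g i) (hF : 0 < F)
    (hEuler : ∑ i, g i * κ i = F)
    (hHess : ∀ η : Fin n → ℝ,
      ∑ i, ∑ j, A i j * η i * η j
        ≤ F⁻¹ * (∑ i, g i * η i) ^ 2 - ∑ i, g i * (κ i)⁻¹ * (η i) ^ 2)
    (hξ : ξ ≠ 0) (hnotprop : ∀ lam : ℝ, ξ ≠ lam • κ) :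
    ∑ i, ∑ j, A i j * ξ i * ξ j < 0 :=
  classK_strictly_concave_general n κ ξ g A F hκ hg hF hEuler hHess hnotprop
end

section
/- Let κ ∈ Γ₊ with κ₁ ≤ ⋯ ≤ κₙ and suppose the positive weights F₁ ≥ ⋯ ≥ Fₙ > 0 satisfy F = Σᵢ Fᵢκᵢ and the pinching κᵢ ≥ ε₀ H with H = Σᵢ κᵢ and ε₀ > 0. Then Z := F·Σᵢ κᵢ³ − (Σᵢ κᵢ²)·(Σᵢ Fᵢκᵢ²) ≥ Σ_{i<j} Fⱼ κᵢκⱼ (κᵢ − κⱼ)² ≥ ε H² Σ_{i<j} (κᵢ − κⱼ)² for some ε = ε(ε₀, min Fᵢ) > 0. -/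
open Finset

/-!
Writing `Z = ∑ᵢ ∑ⱼ (Fᵢκᵢκⱼ³ − Fⱼκᵢ²κⱼ²)` and pairing the `(i, j)` and `(j, i)` terms, the pair `i < j`
contributes `Fⱼκᵢκⱼ(κᵢ − κⱼ)² + (Fᵢ − Fⱼ)κᵢκⱼ²(κⱼ − κᵢ)`, and the second summand is nonnegative because
`κ` increases while `F` decreases. The pinching gives `κᵢκⱼ ≥ (ε₀H)²`, and `Fⱼ ≥ Fₙ`, so `ε = Fₙε₀²` works.
-/

theorem Finset.sum_sum_eq_sum_lt_add_swap {ι M : Type*} [Fintype ι] [LinearOrder ι]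
    [AddCommMonoid M] (f : ι → ι → M) (hf : ∀ i, f i i = 0) :
    ∑ i, ∑ j, f i j = ∑ p ∈ univ.filter (fun p : ι × ι => p.1 < p.2), (f p.1 p.2 + f p.2 p.1) := by
  have split (p : ι × ι) : f p.1 p.2 =
      (if p.1 < p.2 then f p.1 p.2 else 0) + (if p.2 < p.1 then f p.1 p.2 else 0) := by
    rcases lt_trichotomy p.1 p.2 with h | h | h
    · simp [h, h.not_gt]
    · simp [h, hf]
    · simp [h, h.not_gt]
  have swap : ∑ p ∈ univ.filter (fun p : ι × ι => p.2 < p.1), f p.1 p.2 =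
      ∑ p ∈ univ.filter (fun p : ι × ι => p.1 < p.2), f p.2 p.1 :=
    sum_nbij' Prod.swap Prod.swap (by simp) (by simp) (by simp) (by simp) (by simp)
  rw [← univ_product_univ, ← sum_product', univ_product_univ, sum_congr rfl fun p _ => split p,
    sum_add_distrib, ← sum_filter, ← sum_filter, swap, sum_add_distrib]

theorem Z_eq_sum_sum {ι : Type*} [Fintype ι] (κ F : ι → ℝ) :
    (∑ i, F i * κ i) * (∑ i, κ i ^ 3) - (∑ i, κ i ^ 2) * (∑ i, F i * κ i ^ 2) =
      ∑ i, ∑ j, (F i * κ i * κ j ^ 3 - F j * κ i ^ 2 * κ j ^ 2) := by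
  simp only [sum_mul_sum, ← sum_sub_distrib]
  exact sum_congr rfl fun i _ => sum_congr rfl fun j _ => by ring

theorem pair_term_le_symmetrized {a b f g : ℝ} (ha : 0 ≤ a) (hab : a ≤ b) (hgf : g ≤ f) :
    g * a * b * (a - b) ^ 2 ≤
      (f * a * b ^ 3 - g * a ^ 2 * b ^ 2) + (g * b * a ^ 3 - f * b ^ 2 * a ^ 2) := by
  have key : (f * a * b ^ 3 - g * a ^ 2 * b ^ 2) + (g * b * a ^ 3 - f * b ^ 2 * a ^ 2) =
      g * a * b * (a - b) ^ 2 + (f - g) * a * b ^ 2 * (b - a) := by ring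
  rw [key, le_add_iff_nonneg_right]
  exact mul_nonneg (mul_nonneg (mul_nonneg (sub_nonneg.2 hgf) ha) (sq_nonneg b)) (sub_nonneg.2 hab)

theorem sum_pairs_le_Z {ι : Type*} [Fintype ι] [LinearOrder ι] (κ F : ι → ℝ) (hκ : ∀ i, 0 ≤ κ i)
    (hκmono : Monotone κ) (hFanti : Antitone F) :
    ∑ p ∈ univ.filter (fun p : ι × ι => p.1 < p.2), F p.2 * κ p.1 * κ p.2 * (κ p.1 - κ p.2) ^ 2 ≤
      (∑ i, F i * κ i) * (∑ i, κ i ^ 3) - (∑ i, κ i ^ 2) * (∑ i, F i * κ i ^ 2) := by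
  rw [Z_eq_sum_sum, sum_sum_eq_sum_lt_add_swap _ fun i => by ring]
  refine sum_le_sum fun p hp => ?_
  have hlt : p.1 < p.2 := (mem_filter.1 hp).2
  exact pair_term_le_symmetrized (hκ p.1) (hκmono hlt.le) (hFanti hlt.le)

theorem mul_sq_mul_sum_le_sum_of_le {ι : Type*} (s : Finset (ι × ι)) (κ F : ι → ℝ) {c m : ℝ}
    (hc : 0 ≤ c) (hcF : ∀ i, c ≤ F i) (hm : 0 ≤ m) (hmκ : ∀ i, m ≤ κ i) :
    c * m ^ 2 * ∑ p ∈ s, (κ p.1 - κ p.2) ^ 2 ≤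
      ∑ p ∈ s, F p.2 * κ p.1 * κ p.2 * (κ p.1 - κ p.2) ^ 2 := by
  rw [mul_sum]
  refine sum_le_sum fun p _ => mul_le_mul_of_nonneg_right ?_ (sq_nonneg _)
  rw [sq, mul_assoc]
  exact mul_le_mul (hcF p.2) (mul_le_mul (hmκ p.1) (hmκ p.2) hm (hm.trans (hmκ p.1)))
    (mul_nonneg hm hm) (hc.trans (hcF p.2))

/-- the pinching estimate for
`Z = F·∑κᵢ³ − (∑κᵢ²)(∑Fᵢκᵢ²)` with `F = ∑Fᵢκᵢ`:
`Z ≥ ∑_{i<j} Fⱼ κᵢκⱼ (κᵢ−κⱼ)² ≥ ε H² ∑_{i<j}(κᵢ−κⱼ)²`. -/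
theorem pinching_Z_estimate (n : ℕ) (κ F : Fin n → ℝ) (ε₀ : ℝ) (hε₀ : 0 < ε₀)
    (hκpos : ∀ i, 0 < κ i) (hκmono : Monotone κ)
    (hFanti : Antitone F) (hFpos : ∀ i, 0 < F i)
    (hpinch : ∀ i, ε₀ * (∑ j, κ j) ≤ κ i) :
    ∃ ε > (0 : ℝ),
      ((∑ i, F i * κ i) * (∑ i, (κ i) ^ 3)
          - (∑ i, (κ i) ^ 2) * (∑ i, F i * (κ i) ^ 2)
        ≥ ∑ p ∈ Finset.univ.filter (fun p : Fin n × Fin n => p.1 < p.2),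
            F p.2 * κ p.1 * κ p.2 * (κ p.1 - κ p.2) ^ 2)
      ∧ (∑ p ∈ Finset.univ.filter (fun p : Fin n × Fin n => p.1 < p.2),
            F p.2 * κ p.1 * κ p.2 * (κ p.1 - κ p.2) ^ 2
          ≥ ε * (∑ i, κ i) ^ 2 *
            ∑ p ∈ Finset.univ.filter (fun p : Fin n × Fin n => p.1 < p.2),
              (κ p.1 - κ p.2) ^ 2) := by
  have hZ := sum_pairs_le_Z κ F (fun i => (hκpos i).le) hκmono hFanti
  obtain _ | n := n
  · exact ⟨1, one_pos, hZ, by simp⟩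
  have hε₀H : 0 ≤ ε₀ * ∑ j, κ j := mul_nonneg hε₀.le (sum_nonneg fun j _ => (hκpos j).le)
  refine ⟨F (Fin.last n) * ε₀ ^ 2, mul_pos (hFpos _) (pow_pos hε₀ 2), hZ, ?_⟩
  have := mul_sq_mul_sum_le_sum_of_le (univ.filter fun p : Fin (n + 1) × Fin (n + 1) => p.1 < p.2)
    κ F (hFpos _).le (fun i => hFanti (Fin.le_last i)) hε₀H hpinch
  rwa [mul_pow, ← mul_assoc] at this
end

section
/- Let F be a C² symmetric, degree-1 homogeneous curvature function on an open convex cone Γ with F(1,…,1) = n, and let K ⊂ Γ be such that all normalized vectors κ/|κ| under consideration lie in a compact subset of Γ. Then there is a constant c = c(F, K) such that |κ|² − (1/n) F(κ)² ≤ c (|κ|² − (1/n) H(κ)²), i.e. H² − F² ≤ c Σ_{i<j} (κᵢ − κⱼ)². -/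
/-!
Put `φ = H² - F²`. Homogeneity gives `φ (s,…,s) = 0` for `s > 0`, and symmetry together with
Euler's relation forces `DF (s,…,s) = DH`, so `Dφ` vanishes on the positive diagonal as well.
For `x` near a diagonal point, Taylor's theorem at `(x_j,…,x_j)` bounds `φ x` by a
multiple of `‖x - (x_j,…,x_j)‖² ≤ ∑_{i<j} (x_i - x_j)²`; away from the diagonal the right-hand
side is positive and a local constant exists by continuity. Diagonal points of `Γ` are positive
since `Γ` is convex, contains `(1,…,1)` and (in the main case) not `0`. Compactness of `K` makes
the constant uniform on `K`, and both sides are 2-homogeneous. If `0 ∈ Γ`, the open cone `Γ` is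
the whole space and `F`, being 1-homogeneous and differentiable at `0`, is linear, so `F = H`.
-/

open Finset Filter Topology Set

section General

variable {E G : Type*} [NormedAddCommGroup E] [NormedSpace ℝ E] [NormedAddCommGroup G]
  [NormedSpace ℝ G]

theorem ContDiffAt.exists_norm_sub_le_sq_of_fderiv_eq_zero {f : E → G} {u : E}
    (hf : ContDiffAt ℝ 2 f u) :
    ∃ C ≥ 0, ∃ V ∈ 𝓝 u, ∀ x ∈ V, ∀ y ∈ V, fderiv ℝ f y = 0 → ‖f x - f y‖ ≤ C * ‖x - y‖ ^ 2 := by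
  obtain ⟨K, t, ht, hlip⟩ := (hf.fderiv_right (m := 1) le_rfl).exists_lipschitzOnWith
  have hdiff : ∀ᶠ z in 𝓝 u, DifferentiableAt ℝ f z :=
    (hf.eventually (by simp)).mono fun z hz => hz.differentiableAt two_ne_zero
  obtain ⟨ε, hε, hball⟩ := Metric.mem_nhds_iff.1 (inter_mem ht hdiff)
  refine ⟨K, K.coe_nonneg, Metric.ball u ε, Metric.ball_mem_nhds u hε, fun x hx y hy hy0 => ?_⟩
  have hseg : segment ℝ y x ⊆ Metric.ball u ε := (convex_ball u ε).segment_subset hy hx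
  have hbound : ∀ z ∈ segment ℝ y x, ‖fderiv ℝ f z‖ ≤ K * ‖x - y‖ := fun z hz => calc
    ‖fderiv ℝ f z‖ = ‖fderiv ℝ f z - fderiv ℝ f y‖ := by rw [hy0, sub_zero]
    _ ≤ K * ‖z - y‖ := hlip.norm_sub_le (hball (hseg hz)).1 (hball hy).1
    _ ≤ K * ‖x - y‖ := by gcongr; exact norm_sub_le_of_mem_segment hz
  calc ‖f x - f y‖ ≤ K * ‖x - y‖ * ‖x - y‖ :=
        (convex_segment y x).norm_image_sub_le_of_norm_fderiv_le
          (fun z hz => (hball (hseg hz)).2) hbound (left_mem_segment ℝ y x)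
          (right_mem_segment ℝ y x)
    _ = K * ‖x - y‖ ^ 2 := by ring

theorem fderiv_apply_self_of_homogeneous {f : E → G} {y : E} (hf : DifferentiableAt ℝ f y)
    (hhom : ∀ c : ℝ, 0 < c → f (c • y) = c • f y) : fderiv ℝ f y y = f y := by
  have hline : HasDerivAt (fun t : ℝ => f (t • y)) (fderiv ℝ f y y) 1 := by
    refine HasFDerivAt.comp_hasDerivAt (f := fun t : ℝ => t • y) 1 ?_ ?_
    · rw [one_smul]; exact hf.hasFDerivAt
    · simpa using (hasDerivAt_id (1 : ℝ)).smul_const y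
  have heq : (fun t : ℝ => f (t • y)) =ᶠ[𝓝 1] fun t => t • f y :=
    (eventually_gt_nhds one_pos).mono fun t ht => hhom t ht
  exact (hline.congr_of_eventuallyEq heq.symm).unique
    (by simpa using (hasDerivAt_id (1 : ℝ)).smul_const (f y))

theorem apply_eq_fderiv_zero_of_homogeneous {f : E → G} (hf : DifferentiableAt ℝ f 0)
    (hhom : ∀ c : ℝ, 0 < c → ∀ x, f (c • x) = c • f x) (x : E) : f x = fderiv ℝ f 0 x := by
  have hf0 : f 0 = 0 := by
    have h := hhom 2 two_pos 0
    rw [smul_zero, two_smul] at h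
    simpa using h
  have hline : HasDerivWithinAt (fun t : ℝ => t • f x) (fderiv ℝ f 0 x) (Ioi 0) 0 := by
    have : HasDerivAt (fun t : ℝ => f (t • x)) (fderiv ℝ f 0 x) 0 := by
      refine HasFDerivAt.comp_hasDerivAt (f := fun t : ℝ => t • x) 0 ?_ ?_
      · rw [zero_smul]; exact hf.hasFDerivAt
      · simpa using (hasDerivAt_id (0 : ℝ)).smul_const x
    exact this.hasDerivWithinAt.congr (fun t ht => (hhom t ht x).symm) (by simp [hf0])
  exact (uniqueDiffWithinAt_Ioi 0).eq_deriv _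
    (by simpa using ((hasDerivAt_id (0 : ℝ)).smul_const (f x)).hasDerivWithinAt) hline

theorem fderiv_comp_eq_of_eventuallyEq {f : E → G} {y : E} (P : E →L[ℝ] E)
    (hf : DifferentiableAt ℝ f y) (hPy : P y = y) (hfP : f ∘ P =ᶠ[𝓝 y] f) :
    (fderiv ℝ f y).comp P = fderiv ℝ f y := by
  have hfP' : HasFDerivAt f (fderiv ℝ f y) (P y) := by
    rw [hPy]; exact hf.hasFDerivAt
  have h : HasFDerivAt (f ∘ P) ((fderiv ℝ f y).comp P) y := hfP'.comp y P.hasFDerivAt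
  exact (h.congr_of_eventuallyEq hfP.symm).unique hf.hasFDerivAt

end General

theorem LinearMap.apply_eq_sum_of_comp_perm {ι : Type*} [Fintype ι] [DecidableEq ι]
    (L : (ι → ℝ) →ₗ[ℝ] ℝ) (hL : ∀ (σ : Equiv.Perm ι) v, L (v ∘ σ) = L v)
    (h1 : L (fun _ => 1) = Fintype.card ι) (v : ι → ℝ) : L v = ∑ i, v i := by
  have hswap : ∀ i j, L (Pi.single i 1) = L (Pi.single j 1) := fun i j => by
    rw [← hL (Equiv.swap i j), Pi.single_comp_equiv, Equiv.symm_swap, Equiv.swap_apply_left]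
  have hbasis : ∀ i, L (Pi.single i 1) = 1 := fun i => by
    have hcard : (Fintype.card ι : ℝ) ≠ 0 := Nat.cast_ne_zero.2 (Fintype.card_pos_iff.2 ⟨i⟩).ne'
    have : (Fintype.card ι : ℝ) * L (Pi.single i 1) = Fintype.card ι := calc
      _ = ∑ j, L (Pi.single j 1) := by simp [hswap _ i]
      _ = Fintype.card ι := by rw [← map_sum, Finset.univ_sum_single, h1]
    simpa [hcard] using this
  conv_lhs => rw [← Finset.univ_sum_single v]
  rw [map_sum]
  refine Finset.sum_congr rfl fun i _ => ?_
  rw [← mul_one (v i), ← smul_eq_mul, Pi.single_smul', map_smul, hbasis]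

theorem IsCompact.exists_forall_le_mul {X : Type*} [TopologicalSpace X] {K : Set X}
    (hK : IsCompact K) {f g : X → ℝ} (hg : ∀ x, 0 ≤ g x)
    (hloc : ∀ u ∈ K, ∃ c, ∀ᶠ x in 𝓝 u, f x ≤ c * g x) : ∃ c, ∀ x ∈ K, f x ≤ c * g x := by
  refine hK.induction_on ⟨0, by simp⟩ (fun s t hst ⟨c, hc⟩ => ⟨c, fun x hx => hc x (hst hx)⟩)
    (fun s t ⟨c, hc⟩ ⟨d, hd⟩ => ⟨max c d, ?_⟩) fun u hu => ?_
  · rintro x (hx | hx)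
    · exact (hc x hx).trans (mul_le_mul_of_nonneg_right (le_max_left c d) (hg x))
    · exact (hd x hx).trans (mul_le_mul_of_nonneg_right (le_max_right c d) (hg x))
  · obtain ⟨c, hc⟩ := hloc u hu
    exact ⟨_, mem_nhdsWithin_of_mem_nhds hc, c, fun x hx => hx⟩

theorem ContinuousAt.exists_eventually_le_mul {X : Type*} [TopologicalSpace X] {f g : X → ℝ}
    {u : X} (hf : ContinuousAt f u) (hg : ContinuousAt g u) (hgu : 0 < g u) :
    ∃ c, ∀ᶠ x in 𝓝 u, f x ≤ c * g x := by
  have hlt : f u < (f u / g u + 1) * g u := by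
    rw [add_mul, div_mul_cancel₀ _ hgu.ne']; linarith
  exact ⟨_, (hf.eventually_lt (continuousAt_const.mul hg) hlt).mono fun _ => le_of_lt⟩

theorem Convex.pos_of_smul_mem {E : Type*} [AddCommGroup E] [Module ℝ E] {Γ : Set E}
    (hΓ : Convex ℝ Γ) (h0 : (0 : E) ∉ Γ) {x : E} (hx : x ∈ Γ) {r : ℝ} (hrx : r • x ∈ Γ) :
    0 < r := by
  by_contra! hr
  have hr1 : 0 < 1 - r := by linarith
  apply h0
  convert hΓ hrx hx (a := 1 / (1 - r)) (b := -r / (1 - r)) (by positivity)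
    (div_nonneg (by linarith) hr1.le) (by field_simp; ring) using 1
  rw [smul_smul, ← add_smul]
  field_simp
  simp

theorem IsOpen.eq_univ_of_zero_mem_of_smul_mem {E : Type*} [NormedAddCommGroup E]
    [NormedSpace ℝ E] {Γ : Set E} (hΓ : IsOpen Γ) (hcone : ∀ c : ℝ, 0 < c → ∀ x ∈ Γ, c • x ∈ Γ)
    (h0 : (0 : E) ∈ Γ) : Γ = univ := by
  refine eq_univ_of_forall fun x => ?_
  have hlim : Tendsto (fun t : ℝ => t • x) (𝓝[>] 0) (𝓝 0) := by
    have : Continuous fun t : ℝ => t • x := continuous_id.smul continuous_const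
    exact (this.tendsto' 0 0 (zero_smul ℝ x)).mono_left nhdsWithin_le_nhds
  obtain ⟨t, htΓ, ht⟩ := ((hlim.eventually (hΓ.mem_nhds h0)).and self_mem_nhdsWithin).exists
  simpa [smul_smul, inv_mul_cancel₀ (ne_of_gt ht)] using hcone t⁻¹ (inv_pos.2 ht) _ htΓ

section SumSqPairDiff

variable {ι : Type*} [Fintype ι] [LinearOrder ι]

def sumSqPairDiff (x : ι → ℝ) : ℝ :=
  ∑ p ∈ univ.filter (fun p : ι × ι => p.1 < p.2), (x p.1 - x p.2) ^ 2

theorem sumSqPairDiff_nonneg (x : ι → ℝ) : 0 ≤ sumSqPairDiff x :=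
  sum_nonneg fun _ _ => sq_nonneg _

theorem sumSqPairDiff_smul (c : ℝ) (x : ι → ℝ) :
    sumSqPairDiff (c • x) = c ^ 2 * sumSqPairDiff x := by
  simp only [sumSqPairDiff, mul_sum, Pi.smul_apply, smul_eq_mul]
  exact sum_congr rfl fun _ _ => by ring

theorem continuous_sumSqPairDiff : Continuous (sumSqPairDiff : (ι → ℝ) → ℝ) := by
  unfold sumSqPairDiff; fun_prop

theorem sq_sub_le_sumSqPairDiff (x : ι → ℝ) (i j : ι) : (x i - x j) ^ 2 ≤ sumSqPairDiff x := by
  rcases lt_trichotomy i j with h | rfl | h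
  · exact single_le_sum (f := fun p : ι × ι => (x p.1 - x p.2) ^ 2)
      (fun _ _ => sq_nonneg _) (a := (i, j)) (by simpa using h)
  · simpa using sumSqPairDiff_nonneg x
  · rw [← neg_sub, neg_sq]
    exact single_le_sum (f := fun p : ι × ι => (x p.1 - x p.2) ^ 2)
      (fun _ _ => sq_nonneg _) (a := (j, i)) (by simpa using h)

theorem norm_sub_const_sq_le_sumSqPairDiff (x : ι → ℝ) (j : ι) :
    ‖x - fun _ => x j‖ ^ 2 ≤ sumSqPairDiff x := by
  rw [← Real.le_sqrt (norm_nonneg _) (sumSqPairDiff_nonneg x),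
    pi_norm_le_iff_of_nonneg (Real.sqrt_nonneg _)]
  exact fun i => Real.abs_le_sqrt (sq_sub_le_sumSqPairDiff x i j)

theorem eq_const_of_sumSqPairDiff_eq_zero {x : ι → ℝ} (hx : sumSqPairDiff x = 0) (j : ι) :
    x = fun _ => x j :=
  funext fun i => sub_eq_zero.1 (pow_eq_zero_iff two_ne_zero |>.1
    (le_antisymm (hx ▸ sq_sub_le_sumSqPairDiff x i j) (sq_nonneg _)))

end SumSqPairDiff

section CurvatureFunction

variable {n : ℕ} {Γ : Set (Fin n → ℝ)} {F : (Fin n → ℝ) → ℝ}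

theorem apply_const_of_homogeneous (hΓone : (fun _ => (1 : ℝ)) ∈ Γ)
    (hhom : ∀ c : ℝ, 0 < c → ∀ κ ∈ Γ, F (c • κ) = c * F κ) (hnorm : F (fun _ => 1) = n)
    {s : ℝ} (hs : 0 < s) : F (fun _ => s) = n * s := by
  have : (fun _ : Fin n => s) = s • fun _ => 1 := by ext; simp
  rw [this, hhom s hs _ hΓone, hnorm, mul_comm]

theorem hasFDerivAt_const_of_symmetric (hΓopen : IsOpen Γ)
    (hΓcone : ∀ c : ℝ, 0 < c → ∀ κ ∈ Γ, c • κ ∈ Γ) (hΓone : (fun _ => (1 : ℝ)) ∈ Γ)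
    (hF : ContDiffOn ℝ 2 F Γ)
    (hsym : ∀ (σ : Equiv.Perm (Fin n)) (κ : Fin n → ℝ), κ ∈ Γ → F (κ ∘ σ) = F κ)
    (hhom : ∀ c : ℝ, 0 < c → ∀ κ ∈ Γ, F (c • κ) = c * F κ) (hnorm : F (fun _ => 1) = n)
    {s : ℝ} (hs : 0 < s) :
    HasFDerivAt F (∑ i, ContinuousLinearMap.proj (R := ℝ) i) (fun _ => s) := by
  set y : Fin n → ℝ := fun _ => s
  have hys : y = s • fun _ => 1 := by ext; simp [y]
  have hyΓ : y ∈ Γ := hys ▸ hΓcone s hs _ hΓone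
  have hdiff : DifferentiableAt ℝ F y :=
    (hF.contDiffAt (hΓopen.mem_nhds hyΓ)).differentiableAt two_ne_zero
  have hperm (σ : Equiv.Perm (Fin n)) (v : Fin n → ℝ) :
      fderiv ℝ F y (v ∘ σ) = fderiv ℝ F y v := by
    let P : (Fin n → ℝ) →L[ℝ] (Fin n → ℝ) :=
      ContinuousLinearMap.pi fun i => ContinuousLinearMap.proj (σ i)
    have hP := fderiv_comp_eq_of_eventuallyEq P hdiff rfl
      (eventually_of_mem (hΓopen.mem_nhds hyΓ) fun κ hκ => hsym σ κ hκ)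
    exact congrArg (· v) hP
  have hone : fderiv ℝ F y (fun _ => 1) = n := by
    have hlin : fderiv ℝ F y y = s * fderiv ℝ F y (fun _ => 1) := by
      rw [← smul_eq_mul, ← map_smul, ← hys]
    rw [fderiv_apply_self_of_homogeneous hdiff fun c hc => hhom c hc y hyΓ,
      apply_const_of_homogeneous hΓone hhom hnorm hs, mul_comm] at hlin
    exact (mul_left_cancel₀ hs.ne' hlin).symm
  have hsum : fderiv ℝ F y = ∑ i, ContinuousLinearMap.proj (R := ℝ) i :=
    ContinuousLinearMap.ext fun v => by
      simpa using (fderiv ℝ F y).toLinearMap.apply_eq_sum_of_comp_perm hperm (by simpa using hone) v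
  exact hsum ▸ hdiff.hasFDerivAt

theorem hasFDerivAt_sq_sum_sub_sq_const (hΓopen : IsOpen Γ)
    (hΓcone : ∀ c : ℝ, 0 < c → ∀ κ ∈ Γ, c • κ ∈ Γ) (hΓone : (fun _ => (1 : ℝ)) ∈ Γ)
    (hF : ContDiffOn ℝ 2 F Γ)
    (hsym : ∀ (σ : Equiv.Perm (Fin n)) (κ : Fin n → ℝ), κ ∈ Γ → F (κ ∘ σ) = F κ)
    (hhom : ∀ c : ℝ, 0 < c → ∀ κ ∈ Γ, F (c • κ) = c * F κ) (hnorm : F (fun _ => 1) = n)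
    {s : ℝ} (hs : 0 < s) :
    HasFDerivAt (fun x => (∑ i, x i) ^ 2 - F x ^ 2) (0 : (Fin n → ℝ) →L[ℝ] ℝ) (fun _ => s) := by
  have hH : HasFDerivAt (fun x : Fin n → ℝ => ∑ i, x i) (∑ i, ContinuousLinearMap.proj (R := ℝ) i)
      (fun _ => s) :=
    HasFDerivAt.fun_sum fun i _ => hasFDerivAt_apply i _
  have hF' := hasFDerivAt_const_of_symmetric hΓopen hΓcone hΓone hF hsym hhom hnorm hs
  have hHF : ∑ _i : Fin n, s = F (fun _ => s) := by
    simp [apply_const_of_homogeneous hΓone hhom hnorm hs]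
  have hfac : (fun x => (∑ i, x i) ^ 2 - F x ^ 2)
      = fun x => (∑ i, x i - F x) * (∑ i, x i + F x) := by
    funext x; ring
  rw [hfac]
  refine ((hH.fun_sub hF').fun_mul (hH.fun_add hF')).congr_fderiv ?_
  simp [hHF]

theorem exists_eventually_sq_sum_sub_sq_le_of_const (hΓopen : IsOpen Γ)
    (hΓcone : ∀ c : ℝ, 0 < c → ∀ κ ∈ Γ, c • κ ∈ Γ) (hΓone : (fun _ => (1 : ℝ)) ∈ Γ)
    (hF : ContDiffOn ℝ 2 F Γ)
    (hsym : ∀ (σ : Equiv.Perm (Fin n)) (κ : Fin n → ℝ), κ ∈ Γ → F (κ ∘ σ) = F κ)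
    (hhom : ∀ c : ℝ, 0 < c → ∀ κ ∈ Γ, F (c • κ) = c * F κ) (hnorm : F (fun _ => 1) = n)
    {u : Fin n → ℝ} (hu : u ∈ Γ) {j : Fin n} (hu_const : u = fun _ => u j) (hpos : 0 < u j) :
    ∃ c, ∀ᶠ x in 𝓝 u, (∑ i, x i) ^ 2 - F x ^ 2 ≤ c * sumSqPairDiff x := by
  have hφ : ContDiffAt ℝ 2 (fun x => (∑ i, x i) ^ 2 - F x ^ 2) u :=
    (by fun_prop : ContDiff ℝ 2 fun x : Fin n → ℝ => (∑ i, x i) ^ 2).contDiffAt.sub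
      ((hF.contDiffAt (hΓopen.mem_nhds hu)).pow 2)
  obtain ⟨C, hC, V, hV, hTaylor⟩ := hφ.exists_norm_sub_le_sq_of_fderiv_eq_zero
  have hdiag : Tendsto (fun x : Fin n → ℝ => fun _ : Fin n => x j) (𝓝 u) (𝓝 u) := by
    nth_rewrite 2 [hu_const]
    exact (continuous_pi fun _ => continuous_apply j).tendsto u
  refine ⟨C, ?_⟩
  filter_upwards [hV, hdiag.eventually hV,
    ((continuous_apply j).tendsto u).eventually_const_lt hpos] with x hxV hyV hxj
  have hφy : (∑ _i : Fin n, x j) ^ 2 - F (fun _ => x j) ^ 2 = 0 := by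
    simp [apply_const_of_homogeneous hΓone hhom hnorm hxj]
  calc (∑ i, x i) ^ 2 - F x ^ 2
      ≤ ‖((∑ i, x i) ^ 2 - F x ^ 2) - ((∑ _i : Fin n, x j) ^ 2 - F (fun _ => x j) ^ 2)‖ := by
        rw [hφy, sub_zero, Real.norm_eq_abs]; exact le_abs_self _
    _ ≤ C * ‖x - fun _ => x j‖ ^ 2 :=
        hTaylor x hxV _ hyV
          (hasFDerivAt_sq_sum_sub_sq_const hΓopen hΓcone hΓone hF hsym hhom hnorm hxj).fderiv
    _ ≤ C * sumSqPairDiff x := by gcongr; exact norm_sub_const_sq_le_sumSqPairDiff x j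

theorem exists_eventually_sq_sum_sub_sq_le (hΓopen : IsOpen Γ) (hΓconv : Convex ℝ Γ)
    (hΓcone : ∀ c : ℝ, 0 < c → ∀ κ ∈ Γ, c • κ ∈ Γ) (hΓone : (fun _ => (1 : ℝ)) ∈ Γ)
    (hF : ContDiffOn ℝ 2 F Γ)
    (hsym : ∀ (σ : Equiv.Perm (Fin n)) (κ : Fin n → ℝ), κ ∈ Γ → F (κ ∘ σ) = F κ)
    (hhom : ∀ c : ℝ, 0 < c → ∀ κ ∈ Γ, F (c • κ) = c * F κ) (hnorm : F (fun _ => 1) = n)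
    (h0 : (0 : Fin n → ℝ) ∉ Γ) {u : Fin n → ℝ} (hu : u ∈ Γ) :
    ∃ c, ∀ᶠ x in 𝓝 u, (∑ i, x i) ^ 2 - F x ^ 2 ≤ c * sumSqPairDiff x := by
  obtain ⟨j, -⟩ := Function.ne_iff.1 (ne_of_mem_of_not_mem hu h0)
  rcases (sumSqPairDiff_nonneg u).eq_or_lt with hQ | hQ
  · have hconst := eq_const_of_sumSqPairDiff_eq_zero hQ.symm j
    have hpos : 0 < u j := hΓconv.pos_of_smul_mem h0 hΓone
      (by convert hu using 1; ext i; simp [congrFun hconst i])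
    exact exists_eventually_sq_sum_sub_sq_le_of_const hΓopen hΓcone hΓone hF hsym hhom hnorm hu
      hconst hpos
  · have hFu : ContinuousAt F u := hF.continuousOn.continuousAt (hΓopen.mem_nhds hu)
    exact ContinuousAt.exists_eventually_le_mul (by fun_prop)
      continuous_sumSqPairDiff.continuousAt hQ

theorem eq_sum_of_zero_mem (hΓopen : IsOpen Γ) (hΓcone : ∀ c : ℝ, 0 < c → ∀ κ ∈ Γ, c • κ ∈ Γ)
    (hF : ContDiffOn ℝ 2 F Γ)
    (hsym : ∀ (σ : Equiv.Perm (Fin n)) (κ : Fin n → ℝ), κ ∈ Γ → F (κ ∘ σ) = F κ)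
    (hhom : ∀ c : ℝ, 0 < c → ∀ κ ∈ Γ, F (c • κ) = c * F κ) (hnorm : F (fun _ => 1) = n)
    (h0 : (0 : Fin n → ℝ) ∈ Γ) (κ : Fin n → ℝ) : F κ = ∑ i, κ i := by
  obtain rfl := hΓopen.eq_univ_of_zero_mem_of_smul_mem hΓcone h0
  have hdiff : DifferentiableAt ℝ F 0 :=
    (hF.contDiffAt univ_mem).differentiableAt two_ne_zero
  have hlin := apply_eq_fderiv_zero_of_homogeneous hdiff fun c hc x => hhom c hc x (mem_univ x)
  rw [hlin]
  refine (fderiv ℝ F 0).toLinearMap.apply_eq_sum_of_comp_perm (fun σ v => ?_) ?_ κ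
  · simpa [← hlin] using hsym σ v (mem_univ v)
  · simpa [← hlin] using hnorm

end CurvatureFunction

theorem taylor_comparison_HF_general (n : ℕ)
    (Γ : Set (Fin n → ℝ)) (hΓopen : IsOpen Γ) (hΓconv : Convex ℝ Γ)
    (hΓcone : ∀ c : ℝ, 0 < c → ∀ κ ∈ Γ, c • κ ∈ Γ)
    (hΓone : (fun _ => (1 : ℝ)) ∈ Γ)
    (F : (Fin n → ℝ) → ℝ) (hF : ContDiffOn ℝ 2 F Γ)
    (hsym : ∀ (σ : Equiv.Perm (Fin n)) (κ : Fin n → ℝ), κ ∈ Γ → F (κ ∘ σ) = F κ)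
    (hhom : ∀ c : ℝ, 0 < c → ∀ κ ∈ Γ, F (c • κ) = c * F κ)
    (hnorm : F (fun _ => 1) = n)
    (K : Set (Fin n → ℝ)) (hK : IsCompact K) (hKΓ : K ⊆ Γ) :
    ∃ c : ℝ, ∀ κ ∈ Γ, (Real.sqrt (∑ i, (κ i) ^ 2))⁻¹ • κ ∈ K →
      (∑ i, κ i) ^ 2 - (F κ) ^ 2
        ≤ c * ∑ p ∈ Finset.univ.filter (fun p : Fin n × Fin n => p.1 < p.2),
            (κ p.1 - κ p.2) ^ 2 := by
  by_cases h0 : (0 : Fin n → ℝ) ∈ Γ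
  · refine ⟨0, fun κ _ _ => ?_⟩
    simp [eq_sum_of_zero_mem hΓopen hΓcone hF hsym hhom hnorm h0 κ]
  obtain ⟨c, hc⟩ := hK.exists_forall_le_mul sumSqPairDiff_nonneg fun u hu =>
    exists_eventually_sq_sum_sub_sq_le hΓopen hΓconv hΓcone hΓone hF hsym hhom hnorm h0 (hKΓ hu)
  refine ⟨c, fun κ _ hκK => ?_⟩
  obtain ⟨R, hR, u, huK, rfl⟩ : ∃ R : ℝ, 0 < R ∧ ∃ u ∈ K, κ = R • u := by
    set R := Real.sqrt (∑ i, κ i ^ 2)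
    -- `R = 0` would make the junk value `0⁻¹ • κ = 0` a point of `K ⊆ Γ`.
    have hR : R ≠ 0 := fun hR => h0 (by simpa [hR] using hKΓ hκK)
    exact ⟨R, (Real.sqrt_nonneg _).lt_of_ne' hR, _, hκK,
      by rw [smul_smul, mul_inv_cancel₀ hR, one_smul]⟩
  change _ ≤ c * sumSqPairDiff (R • u)
  rw [sumSqPairDiff_smul, hhom R hR u (hKΓ huK)]
  simp only [Pi.smul_apply, smul_eq_mul, ← mul_sum]
  nlinarith [hc u huK]

/-- for a C² symmetric degree-1 homogeneous `F` on an open convex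
cone `Γ` with `F(1,…,1) = n`, and normalized curvatures confined to a compact
`K ⊆ Γ`, one has `H² − F² ≤ c ∑_{i<j} (κᵢ − κⱼ)²`. -/
theorem taylor_comparison_HF (n : ℕ) (hn : 0 < n)
    (Γ : Set (Fin n → ℝ)) (hΓopen : IsOpen Γ) (hΓconv : Convex ℝ Γ)
    (hΓcone : ∀ c : ℝ, 0 < c → ∀ κ ∈ Γ, c • κ ∈ Γ)
    (hΓone : (fun _ => (1 : ℝ)) ∈ Γ)
    (F : (Fin n → ℝ) → ℝ) (hF : ContDiffOn ℝ 2 F Γ)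
    (hsym : ∀ (σ : Equiv.Perm (Fin n)) (κ : Fin n → ℝ), κ ∈ Γ → F (κ ∘ σ) = F κ)
    (hhom : ∀ c : ℝ, 0 < c → ∀ κ ∈ Γ, F (c • κ) = c * F κ)
    (hnorm : F (fun _ => 1) = n)
    (K : Set (Fin n → ℝ)) (hK : IsCompact K) (hKΓ : K ⊆ Γ) :
    ∃ c : ℝ, ∀ κ ∈ Γ, (Real.sqrt (∑ i, (κ i) ^ 2))⁻¹ • κ ∈ K →
      (∑ i, κ i) ^ 2 - (F κ) ^ 2
        ≤ c * ∑ p ∈ Finset.univ.filter (fun p : Fin n × Fin n => p.1 < p.2),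
            (κ p.1 - κ p.2) ^ 2 :=
  taylor_comparison_HF_general n Γ hΓopen hΓconv hΓcone hΓone F hF hsym hhom hnorm K hK hKΓ
end

section
/- Let w : [τ₀, ∞) → ℝ be locally Lipschitz and nonnegative, satisfying w'(τ) ≥ a(τ) w(τ) − c e^{−δτ} for a.e. τ, where a(τ) ≥ c₁ > 0 is measurable and bounded, and suppose w is bounded. Then lim_{τ→∞} w(τ) = 0 and moreover w(τ) ≤ (c/δ) e^{−δτ} for all τ ≥ τ₀. -/
/-!
Set `E τ = (c/δ) e^{-δτ}`, so that `E' = -c e^{-δτ}` and `g = w - E` satisfies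
`g' ≥ a w ≥ c₁ w ≥ 0` a.e. Hence `g` is nondecreasing, and if `g` were positive somewhere,
say `g T = ε > 0`, then `w ≥ g ≥ ε` from `T` on, so `g` would grow at least linearly with
slope `c₁ ε`, contradicting the bound `g ≤ w ≤ M`. Thus `w ≤ E`, and `E → 0` squeezes `w`.
Since locally Lipschitz functions are absolutely continuous, the fundamental theorem of calculus
turns these a.e. derivative bounds into bounds on increments.
-/

open MeasureTheory Set Filter Topology

theorem LocallyLipschitz.absolutelyContinuousOnInterval {f : ℝ → ℝ} (hf : LocallyLipschitz f)
    (a b : ℝ) : AbsolutelyContinuousOnInterval f a b := by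
  obtain ⟨K, hK⟩ := hf.locallyLipschitzOn.exists_lipschitzOnWith_of_compact isCompact_uIcc
  exact hK.absolutelyContinuousOnInterval

theorem AbsolutelyContinuousOnInterval.mul_sub_le_sub_of_ae_le_hasDerivAt {f f' : ℝ → ℝ}
    {s t m : ℝ} (hf : AbsolutelyContinuousOnInterval f s t) (hst : s ≤ t)
    (h : ∀ᵐ x ∂volume.restrict (Icc s t), HasDerivAt f (f' x) x ∧ m ≤ f' x) :
    m * (t - s) ≤ f t - f s := by
  rw [← hf.integral_deriv_eq_sub]
  calc m * (t - s) = ∫ _ in s..t, m := by simp [mul_comm]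
    _ ≤ ∫ x in s..t, deriv f x := by
      refine intervalIntegral.integral_mono_ae_restrict hst intervalIntegrable_const
        hf.intervalIntegrable_deriv ?_
      filter_upwards [h] with x ⟨hderiv, hm⟩
      rwa [hderiv.deriv]

theorem LocallyLipschitz.mul_sub_le_sub_of_ae_le_hasDerivAt {f f' : ℝ → ℝ} {τ₀ s t m : ℝ}
    (hf : LocallyLipschitz f) (hs : τ₀ ≤ s) (hst : s ≤ t)
    (h : ∀ᵐ x ∂volume.restrict (Ici τ₀), HasDerivAt f (f' x) x ∧ m ≤ f' x) :
    m * (t - s) ≤ f t - f s :=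
  (hf.absolutelyContinuousOnInterval s t).mul_sub_le_sub_of_ae_le_hasDerivAt hst
    (ae_restrict_of_ae_restrict_of_subset (Icc_subset_Ici_self.trans (Ici_subset_Ici.2 hs)) h)

theorem LocallyLipschitz.nonpos_of_ae_mul_max_le_hasDerivAt {g g' : ℝ → ℝ} {τ₀ k M : ℝ}
    (hg : LocallyLipschitz g) (hk : 0 < k) (hgM : ∀ τ, τ₀ ≤ τ → g τ ≤ M)
    (h : ∀ᵐ τ ∂volume.restrict (Ici τ₀), HasDerivAt g (g' τ) τ ∧ k * max (g τ) 0 ≤ g' τ) :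
    ∀ τ, τ₀ ≤ τ → g τ ≤ 0 := by
  intro T hT
  by_contra! hε
  set ε := g T
  have hε_le : ∀ t, T ≤ t → ε ≤ g t := by
    intro t hTt
    have := hg.mul_sub_le_sub_of_ae_le_hasDerivAt (m := 0) hT hTt <| by
      filter_upwards [h] with x ⟨hderiv, hle⟩
      exact ⟨hderiv, (mul_nonneg hk.le (le_max_right _ _)).trans hle⟩
    linarith
  have hgrowth : ∀ t, T ≤ t → k * ε * (t - T) ≤ g t - ε := fun t hTt =>
    hg.mul_sub_le_sub_of_ae_le_hasDerivAt le_rfl hTt <| by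
      filter_upwards [ae_restrict_of_ae_restrict_of_subset (Ici_subset_Ici.2 hT) h,
        ae_restrict_mem measurableSet_Ici] with x ⟨hderiv, hle⟩ hx
      refine ⟨hderiv, le_trans ?_ hle⟩
      gcongr
      exact (hε_le x hx).trans (le_max_left _ _)
  have hεM : ε ≤ M := hgM T hT
  set t := T + M / (k * ε)
  have hslope : k * ε * (t - T) = M := by
    simp only [t, add_sub_cancel_left]
    field_simp
  have hTt : T ≤ t := le_add_of_nonneg_right (div_nonneg (hε.le.trans hεM) (by positivity))
  linarith [hgrowth t hTt, hgM t (hT.trans hTt)]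

theorem ode_decay_comparison_general (τ₀ c δ c₁ M : ℝ)
    (hc : 0 < c) (hδ : 0 < δ) (hc₁ : 0 < c₁)
    (w a d : ℝ → ℝ)
    (hwlip : LocallyLipschitz w)
    (hwnonneg : ∀ τ, τ₀ ≤ τ → 0 ≤ w τ)
    (hwbdd : ∀ τ, τ₀ ≤ τ → w τ ≤ M)
    (halow : ∀ τ, c₁ ≤ a τ)
    (hae : ∀ᵐ τ ∂(volume.restrict (Set.Ici τ₀)),
      HasDerivAt w (d τ) τ ∧ a τ * w τ - c * Real.exp (-(δ * τ)) ≤ d τ) :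
    Filter.Tendsto w Filter.atTop (nhds 0)
    ∧ ∀ τ, τ₀ ≤ τ → w τ ≤ c / δ * Real.exp (-(δ * τ)) := by
  set E : ℝ → ℝ := fun τ => c / δ * Real.exp (-(δ * τ))
  have hE_deriv (τ : ℝ) : HasDerivAt E (-(c * Real.exp (-(δ * τ)))) τ := by
    have hlin : HasDerivAt (fun x => -(δ * x)) (-δ) τ :=
      ((hasDerivAt_id' τ).const_mul δ).neg.congr_deriv (by ring)
    exact (hlin.exp.const_mul (c / δ)).congr_deriv (by field_simp)
  have hE_nonneg (τ : ℝ) : 0 ≤ E τ := by positivity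
  have hE_lip : LocallyLipschitz E := (by fun_prop : ContDiff ℝ 1 E).locallyLipschitz
  have hw_le_E : ∀ τ, τ₀ ≤ τ → w τ ≤ E τ := by
    have hg_nonpos := (hwlip.sub hE_lip).nonpos_of_ae_mul_max_le_hasDerivAt hc₁
      (g' := fun τ => d τ + c * Real.exp (-(δ * τ)))
      (fun τ hτ => (sub_le_self _ (hE_nonneg τ)).trans (hwbdd τ hτ)) <| by
        filter_upwards [hae, ae_restrict_mem measurableSet_Ici] with τ ⟨hderiv, hle⟩ hτ
        refine ⟨(hderiv.sub (hE_deriv τ)).congr_deriv (sub_neg_eq_add _ _), ?_⟩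
        have hmax : max (w τ - E τ) 0 ≤ w τ :=
          max_le (sub_le_self _ (hE_nonneg τ)) (hwnonneg τ hτ)
        calc c₁ * max (w τ - E τ) 0 ≤ a τ * w τ :=
              mul_le_mul (halow τ) hmax (le_max_right _ _) (hc₁.le.trans (halow τ))
          _ ≤ d τ + c * Real.exp (-(δ * τ)) := by linarith
    exact fun τ hτ => sub_nonpos.1 (hg_nonpos τ hτ)
  have hE_tendsto : Tendsto E atTop (𝓝 0) := by
    simpa using (Real.tendsto_exp_neg_atTop_nhds_zero.comp
      (tendsto_id.const_mul_atTop hδ)).const_mul (c / δ)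
  refine ⟨tendsto_of_tendsto_of_tendsto_of_le_of_le' tendsto_const_nhds hE_tendsto ?_ ?_, hw_le_E⟩
  · filter_upwards [eventually_ge_atTop τ₀] using hwnonneg
  · filter_upwards [eventually_ge_atTop τ₀] using hw_le_E

/-- ODE comparison: a bounded nonnegative locally Lipschitz `w`
with `w' ≥ a·w − c e^{−δτ}` a.e., `a ≥ c₁ > 0` bounded measurable, satisfies
`w(τ) → 0` and `w(τ) ≤ (c/δ) e^{−δτ}` for all `τ ≥ τ₀`. -/
theorem ode_decay_comparison (τ₀ c δ c₁ M : ℝ)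
    (hc : 0 < c) (hδ : 0 < δ) (hc₁ : 0 < c₁)
    (w a d : ℝ → ℝ)
    (hwlip : LocallyLipschitz w)
    (hwnonneg : ∀ τ, τ₀ ≤ τ → 0 ≤ w τ)
    (hwbdd : ∀ τ, τ₀ ≤ τ → w τ ≤ M)
    (hameas : Measurable a)
    (halow : ∀ τ, c₁ ≤ a τ) (haupp : ∃ C, ∀ τ, a τ ≤ C)
    (hae : ∀ᵐ τ ∂(volume.restrict (Set.Ici τ₀)),
      HasDerivAt w (d τ) τ ∧ a τ * w τ - c * Real.exp (-(δ * τ)) ≤ d τ) :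
    Filter.Tendsto w Filter.atTop (nhds 0)
    ∧ ∀ τ, τ₀ ≤ τ → w τ ≤ c / δ * Real.exp (-(δ * τ)) :=
  ode_decay_comparison_general τ₀ c δ c₁ M hc hδ hc₁ w a d hwlip hwnonneg hwbdd halow hae
end

section
/- Let φ : [τ₁, ∞) → ℝ be locally Lipschitz with φ'(τ) ≤ (φ(τ)² − 1)φ(τ) for a.e. τ ≥ τ₁, φ > 0, and suppose lim_{τ→∞} φ(τ) = 1. If additionally ψ(τ) = φ(τ) + (c/δ)e^{−δτ} satisfies ψ' ≤ (φ²−1)φ a.e., then ψ(τ) ≥ 1 for all τ ≥ τ₁; consequently φ(τ) ≥ 1 − (c/δ)e^{−δτ}. -/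
/-!
Let `ψ τ = φ τ + (c/δ) e^{-δτ}`. While `ψ < 1` we also have `0 < φ < 1`, so `ψ' ≤ (φ² - 1) φ ≤ 0`
a.e.; since `ψ` is locally Lipschitz, hence absolutely continuous, it is nonincreasing there.
So if `ψ τ₂ < 1`, continuous induction keeps `ψ ≤ ψ τ₂ < 1` on all of `[τ₂, ∞)`, which is
incompatible with `ψ → 1`.
-/

open MeasureTheory Set Filter Topology

lemma LocallyLipschitz.le_of_ae_deriv_nonpos {g : ℝ → ℝ} (hg : LocallyLipschitz g) {a b : ℝ}
    (hab : a ≤ b) (hderiv : ∀ᵐ t ∂volume.restrict (Icc a b), deriv g t ≤ 0) : g b ≤ g a := by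
  obtain ⟨K, hK⟩ :=
    hg.locallyLipschitzOn.exists_lipschitzOnWith_of_compact (isCompact_uIcc (a := a) (b := b))
  have hFTC := hK.absolutelyContinuousOnInterval.integral_deriv_eq_sub
  have hneg : 0 ≤ ∫ t in a..b, -deriv g t :=
    intervalIntegral.integral_nonneg_of_ae_restrict hab (hderiv.mono fun t ht => by simpa using ht)
  rw [intervalIntegral.integral_neg, hFTC] at hneg
  linarith

lemma Continuous.le_of_antitone_below {g : ℝ → ℝ} (hg : Continuous g) {a L : ℝ}
    (hdec : ∀ x y, a ≤ x → x ≤ y → (∀ s ∈ Icc x y, g s < L) → g y ≤ g x)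
    (ha : g a < L) {t : ℝ} (hat : a ≤ t) : g t ≤ g a := by
  have hclosed : IsClosed ({x | g x ≤ g a} ∩ Icc a t) :=
    (isClosed_le hg continuous_const).inter isClosed_Icc
  refine hclosed.Icc_subset_of_forall_mem_nhdsWithin (le_refl (g a)) ?_ ⟨hat, le_rfl⟩
  rintro x ⟨hxa : g x ≤ g a, hx, -⟩
  obtain ⟨ε, hε, hball⟩ :=
    Metric.eventually_nhds_iff.mp ((hg.tendsto x).eventually_lt_const (hxa.trans_lt ha))
  refine mem_nhdsGT_iff_exists_Ioc_subset.mpr ⟨x + ε / 2, by simp [hε], fun y hy => ?_⟩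
  have hbelow : ∀ s ∈ Icc x y, g s < L := fun s hs => hball <| by
    rw [Real.dist_eq, abs_of_nonneg (sub_nonneg.mpr hs.1)]
    linarith [hs.2, hy.2]
  exact (hdec x y hx hy.1.le hbelow).trans hxa

lemma Continuous.le_of_tendsto_of_antitone_below {g : ℝ → ℝ} (hg : Continuous g) {a L : ℝ}
    (hlim : Tendsto g atTop (𝓝 L))
    (hdec : ∀ x y, a ≤ x → x ≤ y → (∀ s ∈ Icc x y, g s < L) → g y ≤ g x) :
    L ≤ g a := by
  by_contra! ha
  exact ha.not_ge <| le_of_tendsto hlim <|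
    (eventually_ge_atTop a).mono fun t hat => hg.le_of_antitone_below hdec ha hat

theorem barrier_lower_bound_general (τ₁ c δ : ℝ) (hc : 0 < c) (hδ : 0 < δ)
    (φ e : ℝ → ℝ)
    (hφlip : LocallyLipschitz φ)
    (hφpos : ∀ τ, τ₁ ≤ τ → 0 < φ τ)
    (hφlim : Filter.Tendsto φ Filter.atTop (nhds 1))
    (hψae : ∀ᵐ τ ∂(volume.restrict (Set.Ici τ₁)),
      HasDerivAt (fun s => φ s + c / δ * Real.exp (-(δ * s))) (e τ) τ
        ∧ e τ ≤ ((φ τ) ^ 2 - 1) * φ τ) :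
    ∀ τ, τ₁ ≤ τ →
      1 ≤ φ τ + c / δ * Real.exp (-(δ * τ))
      ∧ 1 - c / δ * Real.exp (-(δ * τ)) ≤ φ τ := by
  set ψ : ℝ → ℝ := fun s => φ s + c / δ * Real.exp (-(δ * s))
  have hψlip : LocallyLipschitz ψ :=
    hφlip.add (ContDiff.locallyLipschitz (𝕂 := ℝ) (by fun_prop))
  have hψlim : Tendsto ψ atTop (𝓝 1) := by
    have hexp : Tendsto (fun s => Real.exp (-(δ * s))) atTop (𝓝 0) :=
      Real.tendsto_exp_atBot.comp <| tendsto_neg_atTop_atBot.comp <|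
        tendsto_id.const_mul_atTop hδ
    simpa using hφlim.add (hexp.const_mul (c / δ))
  have hdec : ∀ x y, τ₁ ≤ x → x ≤ y → (∀ s ∈ Icc x y, ψ s < 1) → ψ y ≤ ψ x := by
    intro x y hx hxy hbelow
    have hsub : Icc x y ⊆ Ici τ₁ := fun s hs => hx.trans hs.1
    refine hψlip.le_of_ae_deriv_nonpos hxy ?_
    filter_upwards [ae_restrict_of_ae_restrict_of_subset hsub hψae,
      ae_restrict_mem measurableSet_Icc] with s ⟨hderiv, hle⟩ hs
    have hφ_lt_one : φ s < 1 := by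
      have : 0 < c / δ * Real.exp (-(δ * s)) := by positivity
      linarith [hbelow s hs]
    have hφs := hφpos s (hsub hs)
    rw [hderiv.deriv]
    nlinarith
  intro τ hτ
  have hψτ : 1 ≤ ψ τ := hψlip.continuous.le_of_tendsto_of_antitone_below hψlim
    fun x y hx => hdec x y (hτ.trans hx)
  exact ⟨hψτ, by linarith [hψτ]⟩

/-- the barrier argument: if `φ' ≤ (φ²−1)φ` a.e., `φ > 0`,
`φ → 1`, and `ψ = φ + (c/δ)e^{−δτ}` also satisfies `ψ' ≤ (φ²−1)φ` a.e.,
then `ψ ≥ 1`, hence `φ ≥ 1 − (c/δ)e^{−δτ}`. -/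
theorem barrier_lower_bound (τ₁ c δ : ℝ) (hc : 0 < c) (hδ : 0 < δ)
    (φ d e : ℝ → ℝ)
    (hφlip : LocallyLipschitz φ)
    (hφpos : ∀ τ, τ₁ ≤ τ → 0 < φ τ)
    (hφae : ∀ᵐ τ ∂(volume.restrict (Set.Ici τ₁)),
      HasDerivAt φ (d τ) τ ∧ d τ ≤ ((φ τ) ^ 2 - 1) * φ τ)
    (hφlim : Filter.Tendsto φ Filter.atTop (nhds 1))
    (hψae : ∀ᵐ τ ∂(volume.restrict (Set.Ici τ₁)),
      HasDerivAt (fun s => φ s + c / δ * Real.exp (-(δ * s))) (e τ) τ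
        ∧ e τ ≤ ((φ τ) ^ 2 - 1) * φ τ) :
    ∀ τ, τ₁ ≤ τ →
      1 ≤ φ τ + c / δ * Real.exp (-(δ * τ))
      ∧ 1 - c / δ * Real.exp (-(δ * τ)) ≤ φ τ :=
  barrier_lower_bound_general τ₁ c δ hc hδ φ e hφlip hφpos hφlim hψae
end

section
/- Quotient concavity propagates: if Q = H_{k+1}/H_k is concave on Γ_{k+1} and σ_k = H_k^{1/k} satisfies the Hessian bound D²H_k(ξ,ξ) ≤ (1 − 1/k) H_k⁻¹ (DH_k·ξ)² on Γ₊, then H_{k+1} satisfies D²H_{k+1}(ξ,ξ) ≤ (1 − 1/(k+1)) H_{k+1}⁻¹ (DH_{k+1}·ξ)², i.e. σ_{k+1} = H_{k+1}^{1/(k+1)} is concave on Γ₊. -/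
/-!
Everything reduces to one variable along lines. From `H_{k+1} = Q H_k` the Leibniz rule gives
`D²H_{k+1}(ξ,ξ) = D²Q(ξ,ξ) H_k + 2 (DQ·ξ)(DH_k·ξ) + Q D²H_k(ξ,ξ)`. Concavity of `Q` makes
the first term nonpositive, the inductive hypothesis bounds the last one, and the slack left in
the claimed bound is exactly `(k (DQ·ξ) H_k - Q (DH_k·ξ))² / (k (k+1) Q H_k) ≥ 0`.

For `f > 0` the bound `D²f(ξ,ξ) ≤ (1 - α) f⁻¹ (Df·ξ)²` says exactly that
`(f^α)'' = α f^(α-2) (f f'' - (1 - α) f'²) ≤ 0` along every line, hence `f^α` is concave;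
take `α = 1/(k+1)`.
-/

open Set Filter Topology

section Line

variable {E F : Type*} [NormedAddCommGroup E] [NormedSpace ℝ E] [NormedAddCommGroup F]
  [NormedSpace ℝ F] {f : E → F} {x v : E} {t : ℝ}

lemma ContDiffAt.differentiableAt_fderiv (hf : ContDiffAt ℝ 2 f x) :
    DifferentiableAt ℝ (fderiv ℝ f) x :=
  (hf.fderiv_right (m := 1) (by norm_num)).differentiableAt (by norm_num)

lemma hasDerivAt_comp_add_smul (hf : DifferentiableAt ℝ f (x + t • v)) :
    HasDerivAt (fun s : ℝ => f (x + s • v)) (fderiv ℝ f (x + t • v) v) t := by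
  have hline : HasDerivAt (fun s : ℝ => x + s • v) v t := by
    simpa using ((hasDerivAt_id t).smul_const v).const_add x
  exact hf.hasFDerivAt.comp_hasDerivAt t hline

lemma hasDerivAt_fderiv_comp_add_smul (hf : DifferentiableAt ℝ (fderiv ℝ f) (x + t • v)) :
    HasDerivAt (fun s : ℝ => fderiv ℝ f (x + s • v) v)
      (iteratedFDeriv ℝ 2 f (x + t • v) ![v, v]) t := by
  simpa [iteratedFDeriv_two_apply] using
    (hasDerivAt_comp_add_smul hf).clm_apply (hasDerivAt_const t v)

lemma AffineMap.coe_lineMap_add_right (x v : E) :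
    ⇑(AffineMap.lineMap (k := ℝ) x (x + v)) = fun s : ℝ => x + s • v := by
  ext s; simp [AffineMap.lineMap_apply_module', add_comm]

variable {f : E → ℝ} {S : Set E}

lemma Convex.preimage_add_smul (hS : Convex ℝ S) (x v : E) :
    Convex ℝ ((fun s : ℝ => x + s • v) ⁻¹' S) := by
  simpa [AffineMap.coe_lineMap_add_right] using
    hS.affine_preimage (AffineMap.lineMap x (x + v))

lemma ConcaveOn.comp_add_smul (hf : ConcaveOn ℝ S f) (x v : E) :
    ConcaveOn ℝ ((fun s : ℝ => x + s • v) ⁻¹' S) (fun s => f (x + s • v)) := by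
  simpa [AffineMap.coe_lineMap_add_right, Function.comp_def] using
    hf.comp_affineMap (AffineMap.lineMap x (x + v))

lemma concaveOn_of_forall_comp_add_smul (hS : Convex ℝ S)
    (hline : ∀ x ∈ S, ∀ y ∈ S,
      ConcaveOn ℝ ((fun s : ℝ => x + s • (y - x)) ⁻¹' S) (fun s => f (x + s • (y - x)))) :
    ConcaveOn ℝ S f := by
  refine ⟨hS, fun x hx y hy a b ha hb hab => ?_⟩
  have h0 : x + (0 : ℝ) • (y - x) = x := by simp
  have h1 : x + (1 : ℝ) • (y - x) = y := by simp
  have hab' : x + (a • (0 : ℝ) + b • (1 : ℝ)) • (y - x) = a • x + b • y := by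
    rw [show a = 1 - b by linarith]
    simp only [smul_eq_mul, mul_zero, mul_one, zero_add]
    module
  have hT0 : (0 : ℝ) ∈ (fun s : ℝ => x + s • (y - x)) ⁻¹' S := by simpa [h0] using hx
  have hT1 : (1 : ℝ) ∈ (fun s : ℝ => x + s • (y - x)) ⁻¹' S := by simpa [h1] using hy
  simpa only [h0, h1, hab'] using (hline x hx y hy).2 hT0 hT1 ha hb hab

end Line

lemma ConcaveOn.nonpos_of_hasDerivAt2 {T : Set ℝ} {φ φ' : ℝ → ℝ} {t φ'' : ℝ}
    (hT : IsOpen T) (hφ : ConcaveOn ℝ T φ) (ht : t ∈ T) (hφ' : ∀ s ∈ T, HasDerivAt φ (φ' s) s)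
    (hφ'' : HasDerivAt φ' φ'' t) : φ'' ≤ 0 := by
  have hanti : AntitoneOn φ' T := fun a ha b hb hab => by
    simpa only [(hφ' a ha).deriv, (hφ' b hb).deriv] using
      hφ.antitoneOn_deriv (fun s hs => (hφ' s hs).differentiableAt) ha hb hab
  have hacc : AccPt t (𝓟 T) := accPt_iff_frequently_nhdsNE.2
    (eventually_nhdsWithin_of_eventually_nhds (hT.mem_nhds ht)).frequently
  exact hφ''.hasDerivWithinAt.nonpos_of_antitoneOn hacc hanti

lemma concaveOn_rpow_of_deriv2_le {T : Set ℝ} {φ φ' φ'' : ℝ → ℝ} {α : ℝ} (hT : IsOpen T)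
    (hTc : Convex ℝ T) (hφ' : ∀ t ∈ T, HasDerivAt φ (φ' t) t)
    (hφ'' : ∀ t ∈ T, HasDerivAt φ' (φ'' t) t) (hpos : ∀ t ∈ T, 0 < φ t) (hα : 0 ≤ α)
    (hbound : ∀ t ∈ T, φ'' t ≤ (1 - α) * (φ t)⁻¹ * φ' t ^ 2) :
    ConcaveOn ℝ T (fun t => φ t ^ α) := by
  have hd : ∀ t ∈ T, HasDerivAt (fun s => φ s ^ α) (φ' t * α * φ t ^ (α - 1)) t :=
    fun t ht => (hφ' t ht).rpow_const (Or.inl (hpos t ht).ne')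
  refine concaveOn_of_hasDerivWithinAt2_nonpos hTc
    (fun t ht => (hd t ht).continuousAt.continuousWithinAt)
    (f' := fun t => φ' t * α * φ t ^ (α - 1))
    (f'' := fun t =>
      φ'' t * α * φ t ^ (α - 1) + φ' t * α * (φ' t * (α - 1) * φ t ^ (α - 1 - 1)))
    ?_ ?_ ?_ <;> rw [hT.interior_eq]
  · exact fun t ht => (hd t ht).hasDerivWithinAt
  · exact fun t ht => (((hφ'' t ht).mul_const α).mul
      ((hφ' t ht).rpow_const (Or.inl (hpos t ht).ne'))).hasDerivWithinAt
  · intro t ht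
    have hφt := hpos t ht
    have hpow : φ t ^ (α - 1) = φ t ^ (α - 1 - 1) * φ t := by
      rw [← Real.rpow_add_one hφt.ne', sub_add_cancel]
    have hmul : φ'' t * φ t ≤ (1 - α) * φ' t ^ 2 :=
      calc φ'' t * φ t ≤ (1 - α) * (φ t)⁻¹ * φ' t ^ 2 * φ t :=
            mul_le_mul_of_nonneg_right (hbound t ht) hφt.le
        _ = (1 - α) * φ' t ^ 2 := by field_simp
    calc φ'' t * α * φ t ^ (α - 1) + φ' t * α * (φ' t * (α - 1) * φ t ^ (α - 1 - 1))
        = α * φ t ^ (α - 1 - 1) * (φ'' t * φ t - (1 - α) * φ' t ^ 2) := by rw [hpow]; ring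
      _ ≤ 0 := mul_nonpos_of_nonneg_of_nonpos (by positivity) (by linarith)

lemma mul_second_deriv_le {K q q' q'' h h' h'' : ℝ} (hK : 0 < K) (hq : 0 < q) (hh : 0 < h)
    (hq'' : q'' ≤ 0) (hh'' : h'' ≤ (1 - 1 / K) * h⁻¹ * h' ^ 2) :
    q'' * h + 2 * (q' * h') + q * h'' ≤
      (1 - 1 / (K + 1)) * (q * h)⁻¹ * (q' * h + q * h') ^ 2 := by
  have hslack : (1 - 1 / (K + 1)) * (q * h)⁻¹ * (q' * h + q * h') ^ 2
      - (2 * (q' * h') + q * ((1 - 1 / K) * h⁻¹ * h' ^ 2))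
      = (K * q' * h - q * h') ^ 2 / (K * (K + 1) * (q * h)) := by
    field_simp; ring
  have : 0 ≤ (K * q' * h - q * h') ^ 2 / (K * (K + 1) * (q * h)) := by positivity
  nlinarith [mul_le_mul_of_nonneg_left hh'' hq.le, mul_nonpos_of_nonpos_of_nonneg hq'' hh.le]

section Hessian

variable {E : Type*} [NormedAddCommGroup E] [NormedSpace ℝ E] {f : E → ℝ} {x : E} {S : Set E}

lemma ConcaveOn.iteratedFDeriv_two_nonpos (hS : IsOpen S) (hf : ConcaveOn ℝ S f)
    (hf2 : ContDiffOn ℝ 2 f S) (hx : x ∈ S) (v : E) : iteratedFDeriv ℝ 2 f x ![v, v] ≤ 0 := by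
  have hf2' : ∀ t ∈ (fun s : ℝ => x + s • v) ⁻¹' S, ContDiffAt ℝ 2 f (x + t • v) :=
    fun t ht => hf2.contDiffAt (hS.mem_nhds ht)
  have h0 : x + (0 : ℝ) • v = x := by simp
  have hT0 : (0 : ℝ) ∈ (fun s : ℝ => x + s • v) ⁻¹' S := by simpa [h0] using hx
  simpa only [h0] using (hf.comp_add_smul x v).nonpos_of_hasDerivAt2
    (hS.preimage (by fun_prop)) hT0
    (fun t ht => hasDerivAt_comp_add_smul ((hf2' t ht).differentiableAt two_ne_zero))
    (hasDerivAt_fderiv_comp_add_smul (hf2' 0 hT0).differentiableAt_fderiv)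

lemma iteratedFDeriv_two_mul_apply {g h : E → ℝ} (hg : ContDiffAt ℝ 2 g x)
    (hh : ContDiffAt ℝ 2 h x) (v : E) :
    iteratedFDeriv ℝ 2 (g * h) x ![v, v] = iteratedFDeriv ℝ 2 g x ![v, v] * h x
      + 2 * (fderiv ℝ g x v * fderiv ℝ h x v) + g x * iteratedFDeriv ℝ 2 h x ![v, v] := by
  have h0 : x + (0 : ℝ) • v = x := by simp
  have hnear : ∀ᶠ s in 𝓝 (0 : ℝ),
      ContDiffAt ℝ 2 g (x + s • v) ∧ ContDiffAt ℝ 2 h (x + s • v) := by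
    have hline : Tendsto (fun s : ℝ => x + s • v) (𝓝 0) (𝓝 x) := by
      simpa only [h0] using (show Continuous (fun s : ℝ => x + s • v) by fun_prop).tendsto 0
    exact hline.eventually ((hg.eventually (by simp)).and (hh.eventually (by simp)))
  have hleibniz : (fun s : ℝ => fderiv ℝ (g * h) (x + s • v) v) =ᶠ[𝓝 0] fun s =>
      fderiv ℝ g (x + s • v) v * h (x + s • v) + g (x + s • v) * fderiv ℝ h (x + s • v) v := by
    filter_upwards [hnear] with s ⟨hgs, hhs⟩
    rw [fderiv_mul (hgs.differentiableAt two_ne_zero) (hhs.differentiableAt two_ne_zero)]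
    simp only [add_apply, smul_apply, smul_eq_mul]
    ring
  have hg0 : ContDiffAt ℝ 2 g (x + (0 : ℝ) • v) := by rwa [h0]
  have hh0 : ContDiffAt ℝ 2 h (x + (0 : ℝ) • v) := by rwa [h0]
  have hgh :=
    hasDerivAt_fderiv_comp_add_smul (f := g * h) (hg0.mul hh0).differentiableAt_fderiv
  have hsum := ((hasDerivAt_fderiv_comp_add_smul hg0.differentiableAt_fderiv).mul
    (hasDerivAt_comp_add_smul (hh0.differentiableAt two_ne_zero))).add
    ((hasDerivAt_comp_add_smul (hg0.differentiableAt two_ne_zero)).mul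
      (hasDerivAt_fderiv_comp_add_smul hh0.differentiableAt_fderiv))
  have hunique := hgh.unique (hsum.congr_of_eventuallyEq hleibniz)
  rw [h0] at hunique
  rw [hunique]
  ring

lemma iteratedFDeriv_two_le_of_eventuallyEq_mul {K : ℝ} (hK : 0 < K) {q h : E → ℝ} {v : E}
    (hf : f =ᶠ[𝓝 x] q * h) (hq : ContDiffAt ℝ 2 q x) (hh : ContDiffAt ℝ 2 h x)
    (hqx : 0 < q x) (hhx : 0 < h x) (hq2 : iteratedFDeriv ℝ 2 q x ![v, v] ≤ 0)
    (hh2 : iteratedFDeriv ℝ 2 h x ![v, v] ≤ (1 - 1 / K) * (h x)⁻¹ * fderiv ℝ h x v ^ 2) :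
    iteratedFDeriv ℝ 2 f x ![v, v] ≤ (1 - 1 / (K + 1)) * (f x)⁻¹ * fderiv ℝ f x v ^ 2 := by
  rw [(hf.iteratedFDeriv ℝ 2).eq_of_nhds, hf.eq_of_nhds, hf.fderiv_eq,
    iteratedFDeriv_two_mul_apply hq hh,
    fderiv_mul (hq.differentiableAt two_ne_zero) (hh.differentiableAt two_ne_zero)]
  simp only [Pi.mul_apply, add_apply, smul_apply, smul_eq_mul]
  linear_combination mul_second_deriv_le (q' := fderiv ℝ q x v) hK hqx hhx hq2 hh2

lemma concaveOn_rpow_of_iteratedFDeriv_two_le {α : ℝ} (hS : IsOpen S) (hSc : Convex ℝ S)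
    (hf : ContDiffOn ℝ 2 f S) (hpos : ∀ x ∈ S, 0 < f x) (hα : 0 ≤ α)
    (hbound : ∀ x ∈ S, ∀ v,
      iteratedFDeriv ℝ 2 f x ![v, v] ≤ (1 - α) * (f x)⁻¹ * fderiv ℝ f x v ^ 2) :
    ConcaveOn ℝ S (fun x => f x ^ α) := by
  refine concaveOn_of_forall_comp_add_smul hSc fun x _ y _ => ?_
  have hf2 : ∀ t ∈ (fun s : ℝ => x + s • (y - x)) ⁻¹' S,
      ContDiffAt ℝ 2 f (x + t • (y - x)) :=
    fun t ht => hf.contDiffAt (hS.mem_nhds ht)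
  exact concaveOn_rpow_of_deriv2_le (hS.preimage (by fun_prop)) (hSc.preimage_add_smul x _)
    (fun t ht => hasDerivAt_comp_add_smul ((hf2 t ht).differentiableAt two_ne_zero))
    (fun t ht => hasDerivAt_fderiv_comp_add_smul (hf2 t ht).differentiableAt_fderiv)
    (fun t ht => hpos _ ht) hα (fun t ht => hbound _ ht _)

end Hessian

lemma isOpen_setOf_forall_pos {ι : Type*} [Finite ι] :
    IsOpen {x : ι → ℝ | ∀ i, 0 < x i} := by
  simpa only [ofPred_forall] using
    isOpen_iInter_of_finite fun i : ι => isOpen_lt continuous_const (continuous_apply i)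

lemma convex_setOf_forall_pos {ι : Type*} : Convex ℝ {x : ι → ℝ | ∀ i, 0 < x i} :=
  fun _ hx _ hy _ _ ha hb hab i => convex_Ioi (0 : ℝ) (hx i) (hy i) ha hb hab

/-- the inductive step for concavity of the roots of the
elementary symmetric polynomials: if `Q = H_{k+1}/H_k` is concave and `H_k`
satisfies `D²H_k(ξ,ξ) ≤ (1−1/k) H_k⁻¹ (DH_k·ξ)²` on `Γ₊`, then `H_{k+1}`
satisfies `D²H_{k+1}(ξ,ξ) ≤ (1−1/(k+1)) H_{k+1}⁻¹ (DH_{k+1}·ξ)²`, i.e.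
`σ_{k+1} = H_{k+1}^{1/(k+1)}` is concave on `Γ₊`. -/
theorem quotient_concavity_step (n k : ℕ) (hk : 1 ≤ k)
    (Hk Hk1 Q : (Fin n → ℝ) → ℝ)
    (hprod : ∀ κ ∈ {κ : Fin n → ℝ | ∀ i, 0 < κ i}, Hk1 κ = Q κ * Hk κ)
    (hHkpos : ∀ κ ∈ {κ : Fin n → ℝ | ∀ i, 0 < κ i}, 0 < Hk κ)
    (hHk1pos : ∀ κ ∈ {κ : Fin n → ℝ | ∀ i, 0 < κ i}, 0 < Hk1 κ)
    (hQconc : ConcaveOn ℝ {κ : Fin n → ℝ | ∀ i, 0 < κ i} Q)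
    (hHkC2 : ContDiffOn ℝ 2 Hk {κ : Fin n → ℝ | ∀ i, 0 < κ i})
    (hHk1C2 : ContDiffOn ℝ 2 Hk1 {κ : Fin n → ℝ | ∀ i, 0 < κ i})
    (hQC2 : ContDiffOn ℝ 2 Q {κ : Fin n → ℝ | ∀ i, 0 < κ i})
    (hind : ∀ κ ∈ {κ : Fin n → ℝ | ∀ i, 0 < κ i}, ∀ ξ : Fin n → ℝ,
      iteratedFDeriv ℝ 2 Hk κ ![ξ, ξ]
        ≤ (1 - 1 / (k : ℝ)) * (Hk κ)⁻¹ * (fderiv ℝ Hk κ ξ) ^ 2) :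
    (∀ κ ∈ {κ : Fin n → ℝ | ∀ i, 0 < κ i}, ∀ ξ : Fin n → ℝ,
      iteratedFDeriv ℝ 2 Hk1 κ ![ξ, ξ]
        ≤ (1 - 1 / ((k : ℝ) + 1)) * (Hk1 κ)⁻¹ * (fderiv ℝ Hk1 κ ξ) ^ 2)
    ∧ ConcaveOn ℝ {κ : Fin n → ℝ | ∀ i, 0 < κ i}
        (fun κ => Hk1 κ ^ ((1 : ℝ) / ((k : ℝ) + 1))) := by
  have hS : IsOpen {κ : Fin n → ℝ | ∀ i, 0 < κ i} := isOpen_setOf_forall_pos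
  have hK : (0 : ℝ) < k := by exact_mod_cast hk
  have hbound : ∀ κ ∈ {κ : Fin n → ℝ | ∀ i, 0 < κ i}, ∀ ξ : Fin n → ℝ,
      iteratedFDeriv ℝ 2 Hk1 κ ![ξ, ξ]
        ≤ (1 - 1 / ((k : ℝ) + 1)) * (Hk1 κ)⁻¹ * (fderiv ℝ Hk1 κ ξ) ^ 2 := by
    intro κ hκ ξ
    have hQκ : 0 < Q κ :=
      pos_of_mul_pos_left (hprod κ hκ ▸ hHk1pos κ hκ) (hHkpos κ hκ).le
    exact iteratedFDeriv_two_le_of_eventuallyEq_mul hK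
      (eventually_of_mem (hS.mem_nhds hκ) hprod) (hQC2.contDiffAt (hS.mem_nhds hκ))
      (hHkC2.contDiffAt (hS.mem_nhds hκ)) hQκ (hHkpos κ hκ)
      (hQconc.iteratedFDeriv_two_nonpos hS hQC2 hκ ξ) (hind κ hκ ξ)
  exact ⟨hbound, concaveOn_rpow_of_iteratedFDeriv_two_le hS convex_setOf_forall_pos hHk1C2
    hHk1pos (by positivity) hbound⟩
end
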